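/- arXiv:2008.01694 — 5 statements merged into one kernel-verified Lean document; each statement's English description precedes it below -/
import Mathlib

section
/- For any real parameters a,b > 0 and ω > 0, the double integral of e^{-(a/2)λ² - (b/2)s²}/(s-λ)² with s ranging over ℝ and λ ranging over the horizontal line ℝ + iω equals -2π√(ab)/(a+b). -/
/-!
For `Im z < 0` one has `1 / z² = -∫₀^∞ t e^{-izt} dt`. With `z = s - λ` the integrand becomes an
absolutely convergent triple integral (the factor `e^{-ωt}` makes the `t`-integral converge), and
after exchanging the order of integration the `s`- and `x`-integrals are Fourier transforms of
Gaussians, the latter along the shifted line `ℝ + iω`, where it takes the same value. What remains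
is `-√(2π/a) √(2π/b) ∫₀^∞ t e^{-(1/(2a) + 1/(2b)) t²} dt = -2π√(ab)/(a+b)`.
-/

open MeasureTheory Set Filter Complex Real Topology

lemma integrableOn_Ioi_mul_exp_neg_mul {r : ℝ} (hr : 0 < r) :
    IntegrableOn (fun t : ℝ => t * rexp (-(r * t))) (Ioi 0) := by
  refine (integrableOn_rpow_mul_exp_neg_mul_rpow (s := 1) (p := 1) (by norm_num) one_pos hr
    ).congr_fun (fun t _ => ?_) measurableSet_Ioi
  simp only [Real.rpow_one, neg_mul]

lemma integral_Ioi_mul_cexp_neg_mul {c : ℂ} (hc : 0 < c.re) :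
    ∫ t in Ioi (0 : ℝ), (t : ℂ) * cexp (-(c * t)) = (c ^ 2)⁻¹ := by
  have hc0 : c ≠ 0 := by rintro rfl; simp at hc
  have hnorm (t : ℝ) : ‖cexp (-(c * t))‖ = rexp (-c.re * t) := by
    simp [Complex.norm_exp]
  have hint : IntegrableOn (fun t : ℝ => (t : ℂ) * cexp (-(c * t))) (Ioi 0) := by
    refine (integrableOn_Ioi_mul_exp_neg_mul hc).mono' (by fun_prop) ?_
    filter_upwards [ae_restrict_mem measurableSet_Ioi] with t ht
    rw [norm_mul, hnorm, Complex.norm_real, Real.norm_of_nonneg ht.le, neg_mul]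
  have hderiv (t : ℝ) : HasDerivAt (fun t : ℝ => -((t / c + (c ^ 2)⁻¹) * cexp (-(c * t))))
      ((t : ℂ) * cexp (-(c * t))) t := by
    have h : HasDerivAt (fun z : ℂ => -((z / c + (c ^ 2)⁻¹) * cexp (-(c * z))))
        (t * cexp (-(c * t))) t := by
      refine ((((hasDerivAt_id' (t : ℂ)).div_const c).add_const (c ^ 2)⁻¹).fun_mul
        ((hasDerivAt_id' (t : ℂ)).const_mul c).fun_neg.cexp).fun_neg.congr_deriv ?_
      field_simp
      ring
    exact h.comp_ofReal
  have hexp : Tendsto (fun t : ℝ => cexp (-(c * t))) atTop (𝓝 0) := by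
    rw [tendsto_zero_iff_norm_tendsto_zero]
    simp_rw [hnorm]
    exact tendsto_exp_atBot.comp (tendsto_id.const_mul_atTop_of_neg (by linarith))
  have hmul : Tendsto (fun t : ℝ => (t : ℂ) * cexp (-(c * t))) atTop (𝓝 0) := by
    rw [tendsto_zero_iff_norm_tendsto_zero]
    refine (tendsto_rpow_mul_exp_neg_mul_atTop_nhds_zero 1 c.re hc).congr' ?_
    filter_upwards [eventually_ge_atTop 0] with t ht
    rw [norm_mul, hnorm, Complex.norm_real, Real.norm_of_nonneg ht, Real.rpow_one]
  have hlim : Tendsto (fun t : ℝ => -((t / c + (c ^ 2)⁻¹) * cexp (-(c * t)))) atTop (𝓝 0) := by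
    simpa [add_mul, div_eq_inv_mul, mul_assoc] using
      ((hmul.const_mul c⁻¹).add (hexp.const_mul (c ^ 2)⁻¹)).neg
  rw [integral_Ioi_of_hasDerivAt_of_tendsto (by fun_prop : Continuous _).continuousWithinAt
    (fun t _ => hderiv t) hint hlim]
  simp

lemma inv_sq_eq_neg_integral_Ioi {z : ℂ} (hz : z.im < 0) :
    (z ^ 2)⁻¹ = -∫ t in Ioi (0 : ℝ), (t : ℂ) * cexp (-(I * z * t)) := by
  rw [integral_Ioi_mul_cexp_neg_mul (by simpa using hz), mul_pow, I_sq, neg_one_mul, inv_neg,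
    neg_neg]

lemma integral_integral_swap_Ioi_of_re_le {E : ℝ → ℝ → ℂ} (hE : Continuous (Function.uncurry E))
    {K β ω : ℝ} (hβ : 0 < β) (hω : 0 < ω) (hre : ∀ u t, (E u t).re ≤ K - β * u ^ 2 - ω * t) :
    ∫ u, ∫ t in Ioi (0 : ℝ), (t : ℂ) * cexp (E u t) =
      ∫ t in Ioi (0 : ℝ), ∫ u, (t : ℂ) * cexp (E u t) := by
  refine integral_integral_swap (((integrable_exp_neg_mul_sq hβ).const_mul (rexp K)).mul_prod
    (integrableOn_Ioi_mul_exp_neg_mul hω) |>.mono' (by fun_prop) ?_)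
  rw [← Measure.restrict_univ (μ := (volume : Measure ℝ)), Measure.prod_restrict,
    ae_restrict_iff' (MeasurableSet.univ.prod measurableSet_Ioi)]
  refine Eventually.of_forall fun ⟨u, t⟩ ⟨_, (ht : 0 < t)⟩ => ?_
  calc ‖(t : ℂ) * cexp (E u t)‖ = t * rexp (E u t).re := by
        rw [norm_mul, Complex.norm_exp, Complex.norm_real, Real.norm_of_nonneg ht.le]
    _ ≤ t * rexp (K - β * u ^ 2 - ω * t) := by gcongr; exact hre u t
    _ = rexp K * rexp (-β * u ^ 2) * (t * rexp (-(ω * t))) := by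
        rw [show K - β * u ^ 2 - ω * t = K + -β * u ^ 2 + -(ω * t) by ring, Real.exp_add,
          Real.exp_add]
        ring

lemma integral_cexp_neg_mul_sq_add_mul {β : ℂ} (hβ : 0 < β.re) (c d : ℂ) :
    ∫ x : ℝ, cexp (-β * (x + c) ^ 2 + d * (x + c)) =
      (π / β) ^ (1 / 2 : ℂ) * cexp (d ^ 2 / (4 * β)) := by
  have hβ0 : β ≠ 0 := by rintro rfl; simp at hβ
  have h (x : ℝ) : -β * (x + c) ^ 2 + d * (x + c) =
      -β * x ^ 2 + (d - 2 * β * c) * x + (d * c - β * c ^ 2) := by ring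
  simp_rw [h]
  rw [integral_cexp_quadratic (by simpa using hβ), neg_neg]
  congr 2
  field_simp
  ring

lemma integral_cexp_neg_half_mul_sq_add_I_mul {a : ℝ} (ha : 0 < a) (c : ℂ) (t : ℝ) :
    ∫ x : ℝ, cexp (-((a : ℂ) / 2) * (x + c) ^ 2 + I * t * (x + c)) =
      (√(2 * π / a) : ℝ) * cexp (-(t : ℂ) ^ 2 / (2 * a)) := by
  have ha0 : (a : ℂ) ≠ 0 := by exact_mod_cast ha.ne'
  rw [integral_cexp_neg_mul_sq_add_mul (by simpa using ha), Real.sqrt_eq_rpow,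
    ofReal_cpow (by positivity)]
  congr 1
  · push_cast
    congr 1
    field_simp
  · congr 1
    rw [mul_pow, I_sq]
    field_simp
    ring

lemma integral_cexp_neg_half_mul_sq_div_sub_sq {b : ℝ} (hb : 0 < b) {z : ℂ} (hz : 0 < z.im) :
    ∫ s : ℝ, cexp (-((b : ℂ) / 2) * s ^ 2) / (s - z) ^ 2 =
      -((√(2 * π / b) : ℝ) * ∫ t in Ioi (0 : ℝ), (t : ℂ) * cexp (I * t * z - t ^ 2 / (2 * b))) := by
  have hrep (s : ℝ) : cexp (-((b : ℂ) / 2) * s ^ 2) / (s - z) ^ 2 =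
      -∫ t in Ioi (0 : ℝ), (t : ℂ) * cexp (-((b : ℂ) / 2) * s ^ 2 + -(I * (s - z) * t)) := by
    rw [div_eq_mul_inv, inv_sq_eq_neg_integral_Ioi (by simpa using hz), mul_neg,
      ← integral_const_mul]
    congr 2 with t
    rw [Complex.exp_add]
    ring
  have hre (s t : ℝ) : (-((b : ℂ) / 2) * s ^ 2 + -(I * (s - z) * t)).re ≤
      0 - b / 2 * s ^ 2 - z.im * t := by
    simp [Complex.mul_re, ← ofReal_pow]
  simp_rw [hrep]
  rw [integral_neg, integral_integral_swap_Ioi_of_re_le (by fun_prop) (half_pos hb) hz hre,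
    ← integral_const_mul]
  congr 2 with t
  -- the shifted Gaussian with shift `0` and frequency `-t`
  have hsplit (s : ℝ) : (t : ℂ) * cexp (-((b : ℂ) / 2) * s ^ 2 + -(I * (s - z) * t)) =
      t * cexp (I * t * z) *
        cexp (-((b : ℂ) / 2) * (s + 0) ^ 2 + I * ((-t : ℝ) : ℂ) * (s + 0)) := by
    rw [mul_assoc (t : ℂ), ← Complex.exp_add]
    push_cast
    ring_nf
  simp_rw [hsplit]
  rw [integral_const_mul, integral_cexp_neg_half_mul_sq_add_I_mul hb, sub_eq_add_neg,
    Complex.exp_add, ofReal_neg, neg_sq, neg_div]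
  ring

lemma integral_line_integral_Ioi_mul_cexp {a b ω : ℝ} (ha : 0 < a) (hb : 0 < b) (hω : 0 < ω) :
    ∫ x : ℝ, ∫ t in Ioi (0 : ℝ),
        (t : ℂ) * cexp (-((a : ℂ) / 2) * (x + ω * I) ^ 2 + I * t * (x + ω * I) - t ^ 2 / (2 * b)) =
      (√(2 * π / a) : ℝ) * (1 / a + 1 / b : ℂ)⁻¹ := by
  have hre (x t : ℝ) : (-((a : ℂ) / 2) * (x + ω * I) ^ 2 + I * t * (x + ω * I) -
      t ^ 2 / (2 * b)).re ≤ a / 2 * ω ^ 2 - a / 2 * x ^ 2 - ω * t := by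
    have hre_eq : (-((a : ℂ) / 2) * (x + ω * I) ^ 2 + I * t * (x + ω * I) - t ^ 2 / (2 * b)).re =
        a / 2 * ω ^ 2 - a / 2 * x ^ 2 - ω * t - t ^ 2 / (2 * b) := by
      simp [sq, Complex.mul_re, Complex.div_re]
      field_simp
      ring
    have : 0 ≤ t ^ 2 / (2 * b) := by positivity
    linarith
  rw [integral_integral_swap_Ioi_of_re_le (by fun_prop) (half_pos ha) hω hre]
  have hx (t : ℝ) : ∫ x : ℝ, (t : ℂ) * cexp (-((a : ℂ) / 2) * (x + ω * I) ^ 2 +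
      I * t * (x + ω * I) - t ^ 2 / (2 * b)) =
      (√(2 * π / a) : ℝ) * ((t : ℂ) * cexp (-(1 / (2 * a) + 1 / (2 * b)) * t ^ 2)) := by
    have hsplit (x : ℝ) : (t : ℂ) * cexp (-((a : ℂ) / 2) * (x + ω * I) ^ 2 + I * t * (x + ω * I) -
        t ^ 2 / (2 * b)) = t * cexp (-t ^ 2 / (2 * b)) *
          cexp (-((a : ℂ) / 2) * (x + ω * I) ^ 2 + I * t * (x + ω * I)) := by
      rw [mul_assoc (t : ℂ), ← Complex.exp_add]
      ring_nf
    simp_rw [hsplit]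
    rw [integral_const_mul, integral_cexp_neg_half_mul_sq_add_I_mul ha,
      show -(1 / (2 * a) + 1 / (2 * b)) * (t : ℂ) ^ 2 = -t ^ 2 / (2 * b) + -t ^ 2 / (2 * a) by ring,
      Complex.exp_add]
    ring
  simp_rw [hx]
  rw [integral_const_mul, integral_mul_cexp_neg_mul_sq (by simp; positivity)]
  ring

lemma sqrt_two_pi_div_mul_sqrt_two_pi_div_div {a b : ℝ} (ha : 0 < a) (hb : 0 < b) :
    √(2 * π / b) * √(2 * π / a) / (1 / a + 1 / b) = 2 * π * √(a * b) / (a + b) := by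
  have hab : √(a * b) ^ 2 = a * b := Real.sq_sqrt (by positivity)
  have hprod : √(2 * π / b) * √(2 * π / a) = 2 * π / √(a * b) := by
    rw [← Real.sqrt_mul (by positivity), ← Real.sqrt_sq (by positivity : 0 ≤ 2 * π / √(a * b)),
      div_pow, hab]
    congr 1
    field_simp
  have : 0 < √(a * b) := Real.sqrt_pos.mpr (by positivity)
  rw [hprod]
  field_simp
  rw [hab]
  ring

/-- For `a, b > 0` and `ω > 0`, the double integral of
`e^{-(a/2)λ² - (b/2)s²}/(s-λ)²` with `s` over `ℝ` and `λ = x + iω` over the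
horizontal line `ℝ + iω` equals `-2π√(ab)/(a+b)`. -/
theorem stmt0 (a b ω : ℝ) (ha : 0 < a) (hb : 0 < b) (hω : 0 < ω) :
    (∫ x : ℝ, ∫ s : ℝ,
        Complex.exp (-((a : ℂ)/2) * ((x : ℂ) + (ω : ℂ) * Complex.I)^2
            - ((b : ℂ)/2) * (s : ℂ)^2) /
          ((s : ℂ) - ((x : ℂ) + (ω : ℂ) * Complex.I))^2)
      = ((-(2 * Real.pi * Real.sqrt (a * b) / (a + b)) : ℝ) : ℂ) := by
  have hline (x : ℝ) : 0 < ((x : ℂ) + ω * I).im := by simpa using hω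
  calc _ = ∫ x : ℝ, cexp (-((a : ℂ) / 2) * (x + ω * I) ^ 2) *
        ∫ s : ℝ, cexp (-((b : ℂ) / 2) * s ^ 2) / (s - (x + ω * I)) ^ 2 := by
        congr 1 with x
        rw [← integral_const_mul]
        congr 1 with s
        rw [← mul_div_assoc, ← Complex.exp_add]
        ring_nf
    _ = -((√(2 * π / b) : ℝ) * ∫ x : ℝ, ∫ t in Ioi (0 : ℝ),
        (t : ℂ) * cexp (-((a : ℂ) / 2) * (x + ω * I) ^ 2 + I * t * (x + ω * I) -
          t ^ 2 / (2 * b))) := by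
        simp_rw [integral_cexp_neg_half_mul_sq_div_sub_sq hb (hline _)]
        rw [← integral_const_mul, ← integral_neg]
        congr 1 with x
        rw [mul_neg, mul_left_comm, ← integral_const_mul]
        congr 3 with t
        rw [add_sub_assoc, Complex.exp_add]
        ring
    _ = _ := by
        rw [integral_line_integral_Ioi_mul_cexp ha hb hω,
          ← sqrt_two_pi_div_mul_sqrt_two_pi_div_div ha hb]
        push_cast
        field_simp
end

section
/- For every n ≥ 2 and every t ≥ 0, the integral operator T_n on L²(t,∞) with kernel T_n(x,y) = (1/√(2π)) e^{-(x²+y²)/2} 𝔢_{n-2}(xy), where 𝔢_m(z) = Σ_{k=0}^m z^k/k! is the exponential partial sum, is self-adjoint, nonnegative, and has operator norm at most 1. -/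
/-!
Write `φₖ(x) = xᵏ e^{-x²/2}`. The kernel is `∑_{k<n-1} φₖ(x) φₖ(y) / (√(2π) k!)`, so `T_n` is a
finite nonnegative combination of the rank-one operators `f ↦ ⟪φₖ, f⟫ φₖ`; this makes it
self-adjoint and nonnegative, and its norm is the supremum of its quadratic form on the unit sphere.
For `x, y ≥ 0` the truncated exponential series is at most `e^{xy}`, so the kernel is dominated by
the heat kernel `e^{-(x-y)²/2}/√(2π)`, whose rows integrate to at most `1`. Schur's test for this
symmetric dominating kernel bounds the quadratic form by `‖f‖²`.
-/

open MeasureTheory Real Set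
open scoped ENNReal NNReal Nat
open ProbabilityTheory

theorem ENNReal.two_mul_mul_le_add_sq (a b : ℝ≥0∞) : 2 * (a * b) ≤ a ^ 2 + b ^ 2 := by
  rcases eq_top_or_lt_top a with rfl | ha
  · simp
  rcases eq_top_or_lt_top b with rfl | hb
  · simp
  lift a to ℝ≥0 using ha.ne
  lift b to ℝ≥0 using hb.ne
  rw [← mul_assoc]
  exact_mod_cast two_mul_le_add_sq a b

section Schur

variable {α : Type*} [MeasurableSpace α] {μ : Measure α} [SFinite μ]

theorem lintegral_lintegral_mul_le_of_symm {W : α → α → ℝ≥0∞}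
    (hW : Measurable (Function.uncurry W)) (hWsymm : ∀ x y, W x y = W y x) {C : ℝ≥0∞}
    (hC : ∀ x, ∫⁻ y, W x y ∂μ ≤ C) {G : α → ℝ≥0∞} (hG : AEMeasurable G μ) :
    ∫⁻ x, ∫⁻ y, W x y * (G x * G y) ∂μ ∂μ ≤ C * ∫⁻ x, G x ^ 2 ∂μ := by
  have hWx (x : α) : Measurable (W x) := hW.comp measurable_prodMk_left
  have half : ∫⁻ x, ∫⁻ y, W x y * G x ^ 2 ∂μ ∂μ ≤ C * ∫⁻ x, G x ^ 2 ∂μ := by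
    calc ∫⁻ x, ∫⁻ y, W x y * G x ^ 2 ∂μ ∂μ = ∫⁻ x, (∫⁻ y, W x y ∂μ) * G x ^ 2 ∂μ := by
          simp_rw [lintegral_mul_const _ (hWx _)]
      _ ≤ ∫⁻ x, C * G x ^ 2 ∂μ := by gcongr with x; exact hC x
      _ = C * ∫⁻ x, G x ^ 2 ∂μ := lintegral_const_mul'' _ (hG.pow_const 2)
  have swap : ∫⁻ x, ∫⁻ y, W x y * G y ^ 2 ∂μ ∂μ = ∫⁻ x, ∫⁻ y, W x y * G x ^ 2 ∂μ ∂μ := by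
    rw [lintegral_lintegral_swap (hW.aemeasurable.mul (hG.comp_snd.pow_const 2))]
    simp_rw [hWsymm]
  have double : 2 * ∫⁻ x, ∫⁻ y, W x y * (G x * G y) ∂μ ∂μ ≤ 2 * (C * ∫⁻ x, G x ^ 2 ∂μ) := by
    calc 2 * ∫⁻ x, ∫⁻ y, W x y * (G x * G y) ∂μ ∂μ
        = ∫⁻ x, ∫⁻ y, W x y * (2 * (G x * G y)) ∂μ ∂μ := by
          rw [← lintegral_const_mul' _ _ ENNReal.ofNat_ne_top]
          refine lintegral_congr fun x => ?_
          rw [← lintegral_const_mul' _ _ ENNReal.ofNat_ne_top]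
          exact lintegral_congr fun y => by ring
      _ ≤ ∫⁻ x, ∫⁻ y, W x y * (G x ^ 2 + G y ^ 2) ∂μ ∂μ := by
          gcongr; exact ENNReal.two_mul_mul_le_add_sq _ _
      _ = ∫⁻ x, ∫⁻ y, W x y * G x ^ 2 ∂μ ∂μ + ∫⁻ x, ∫⁻ y, W x y * G y ^ 2 ∂μ ∂μ := by
          simp_rw [mul_add]
          have hmeas : AEMeasurable (fun x => ∫⁻ y, W x y * G x ^ 2 ∂μ) μ :=
            (hW.aemeasurable.mul (hG.comp_fst.pow_const 2)).lintegral_prod_right'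
          rw [← lintegral_add_left' hmeas]
          exact lintegral_congr fun x => lintegral_add_left ((hWx x).mul_const _) _
      _ ≤ 2 * (C * ∫⁻ x, G x ^ 2 ∂μ) := by rw [swap, ← two_mul]; gcongr
  exact (ENNReal.mul_le_mul_iff_right two_ne_zero ENNReal.ofNat_ne_top).mp double

theorem sum_mul_sq_lintegral_mul_le_of_symm {ι : Type*} (s : Finset ι) (c : ι → ℝ≥0∞)
    {ψ : ι → α → ℝ≥0∞} (hψ : ∀ k, AEMeasurable (ψ k) μ) {W : α → α → ℝ≥0∞}
    (hW : Measurable (Function.uncurry W)) (hWsymm : ∀ x y, W x y = W y x) {C : ℝ≥0∞}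
    (hC : ∀ x, ∫⁻ y, W x y ∂μ ≤ C)
    (hψW : ∀ᵐ x ∂μ, ∀ᵐ y ∂μ, ∑ k ∈ s, c k * (ψ k x * ψ k y) ≤ W x y)
    {G : α → ℝ≥0∞} (hG : AEMeasurable G μ) :
    ∑ k ∈ s, c k * (∫⁻ x, ψ k x * G x ∂μ) ^ 2 ≤ C * ∫⁻ x, G x ^ 2 ∂μ := by
  have hprod (k : ι) : AEMeasurable
      (Function.uncurry fun x y => c k * (ψ k x * ψ k y) * (G x * G y)) (μ.prod μ) :=
    ((((hψ k).comp_fst.mul (hψ k).comp_snd).const_mul _).mul (hG.comp_fst.mul hG.comp_snd))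
  calc ∑ k ∈ s, c k * (∫⁻ x, ψ k x * G x ∂μ) ^ 2
      = ∑ k ∈ s, ∫⁻ x, ∫⁻ y, c k * (ψ k x * ψ k y) * (G x * G y) ∂μ ∂μ := by
        refine Finset.sum_congr rfl fun k _ => ?_
        have hψG : AEMeasurable (fun x => ψ k x * G x) μ := (hψ k).mul hG
        rw [sq, ← mul_assoc, ← lintegral_const_mul'' (c k) hψG,
          ← lintegral_lintegral_mul (hψG.const_mul _) hψG]
        exact lintegral_congr fun x => lintegral_congr fun y => by ring
    _ = ∫⁻ x, ∫⁻ y, (∑ k ∈ s, c k * (ψ k x * ψ k y)) * (G x * G y) ∂μ ∂μ := by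
        have hx (k : ι) : AEMeasurable
            (fun x => ∫⁻ y, c k * (ψ k x * ψ k y) * (G x * G y) ∂μ) μ :=
          (hprod k).lintegral_prod_right'
        rw [← lintegral_finsetSum' s fun k _ => hx k]
        refine lintegral_congr fun x => ?_
        have hy (k : ι) : AEMeasurable (fun y => c k * (ψ k x * ψ k y) * (G x * G y)) μ :=
          (((hψ k).const_mul _).const_mul _).mul (hG.const_mul _)
        rw [← lintegral_finsetSum' s fun k _ => hy k]
        simp_rw [Finset.sum_mul]
    _ ≤ ∫⁻ x, ∫⁻ y, W x y * (G x * G y) ∂μ ∂μ := by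
        refine lintegral_mono_ae ?_
        filter_upwards [hψW] with x hx
        refine lintegral_mono_ae ?_
        filter_upwards [hx] with y hy
        gcongr
    _ ≤ C * ∫⁻ x, G x ^ 2 ∂μ := lintegral_lintegral_mul_le_of_symm hW hWsymm hC hG

end Schur

theorem ContinuousLinearMap.IsPositive.norm_le_of_re_inner_le {𝕜 E : Type*} [RCLike 𝕜]
    [NormedAddCommGroup E] [InnerProductSpace 𝕜 E] {T : E →L[𝕜] E} (hT : T.IsPositive)
    {C : ℝ} (hC : 0 ≤ C) (hTC : ∀ x, RCLike.re (inner 𝕜 (T x) x) ≤ C * ‖x‖ ^ 2) : ‖T‖ ≤ C := by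
  rw [T.norm_eq_iSup_rayleighQuotient hT.isSymmetric]
  refine ciSup_le fun x => ?_
  rw [ContinuousLinearMap.rayleighQuotient, ContinuousLinearMap.reApplyInnerSelf_apply,
    abs_of_nonneg (div_nonneg (hT.re_inner_nonneg_left x) (sq_nonneg _))]
  exact div_le_of_le_mul₀ (sq_nonneg _) hC (hTC x)

noncomputable def gaussMonomial (k : ℕ) (x : ℝ) : ℝ := x ^ k * exp (-x ^ 2 / 2)

lemma gaussMonomial_nonneg (k : ℕ) {x : ℝ} (hx : 0 ≤ x) : 0 ≤ gaussMonomial k x := by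
  unfold gaussMonomial; positivity

noncomputable def kernelCoeff (k : ℕ) : ℝ := (√(2 * π) * k !)⁻¹

lemma kernelCoeff_nonneg (k : ℕ) : 0 ≤ kernelCoeff k := by unfold kernelCoeff; positivity

noncomputable def partialExpKernel (m : ℕ) (x y : ℝ) : ℝ :=
  1 / √(2 * π) * exp (-(x ^ 2 + y ^ 2) / 2) * ∑ k ∈ Finset.range m, (x * y) ^ k / (k ! : ℝ)

lemma partialExpKernel_eq_sum (m : ℕ) (x y : ℝ) :
    partialExpKernel m x y =
      ∑ k ∈ Finset.range m, kernelCoeff k * (gaussMonomial k x * gaussMonomial k y) := by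
  rw [partialExpKernel, Finset.mul_sum]
  refine Finset.sum_congr rfl fun k _ => ?_
  rw [kernelCoeff, gaussMonomial, gaussMonomial, mul_pow,
    show -(x ^ 2 + y ^ 2) / 2 = -x ^ 2 / 2 + -y ^ 2 / 2 by ring, exp_add]
  field_simp

lemma partialExpKernel_le_gaussianPDFReal (m : ℕ) {x y : ℝ} (hxy : 0 ≤ x * y) :
    partialExpKernel m x y ≤ gaussianPDFReal x 1 y := by
  calc partialExpKernel m x y ≤ 1 / √(2 * π) * exp (-(x ^ 2 + y ^ 2) / 2) * exp (x * y) := by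
        unfold partialExpKernel
        gcongr
        exact sum_le_exp_of_nonneg hxy m
    _ = gaussianPDFReal x 1 y := by
        rw [gaussianPDFReal, mul_assoc, ← exp_add]
        simp only [NNReal.coe_one, mul_one, one_div]
        ring_nf

lemma gaussianPDF_comm (v : ℝ≥0) (x y : ℝ) : gaussianPDF x v y = gaussianPDF y v x := by
  simp only [gaussianPDF, gaussianPDFReal]
  ring_nf

lemma measurable_uncurry_gaussianPDF (v : ℝ≥0) :
    Measurable (Function.uncurry fun x y => gaussianPDF x v y) := by
  refine ENNReal.measurable_ofReal.comp (Continuous.measurable ?_)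
  simp only [gaussianPDFReal]
  fun_prop

lemma memLp_gaussMonomial (k : ℕ) : MemLp (gaussMonomial k) 2 volume := by
  refine (memLp_two_iff_integrable_sq (by unfold gaussMonomial; fun_prop)).2 ?_
  have h := integrable_rpow_mul_exp_neg_mul_sq (b := 1) one_pos (s := ((2 * k : ℕ) : ℝ))
    (by push_cast; linarith [Nat.cast_nonneg (α := ℝ) k])
  refine h.congr (ae_of_all _ fun x => ?_)
  simp only [gaussMonomial, Real.rpow_natCast, neg_one_mul, mul_pow, pow_mul, ← exp_nat_mul]
  ring_nf

noncomputable def gaussMonomialLp (t : ℝ) (k : ℕ) : Lp ℝ 2 (volume.restrict (Ioi t)) :=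
  ((memLp_gaussMonomial k).restrict (Ioi t)).toLp _

lemma inner_gaussMonomialLp (t : ℝ) (k : ℕ) (f : Lp ℝ 2 (volume.restrict (Ioi t))) :
    inner ℝ (gaussMonomialLp t k) f = ∫ x in Ioi t, gaussMonomial k x * f x := by
  rw [L2.inner_def]
  refine integral_congr_ae ?_
  filter_upwards [((memLp_gaussMonomial k).restrict (Ioi t)).coeFn_toLp] with x hx
  simp [gaussMonomialLp, hx, mul_comm]

noncomputable def partialExpKernelOp (t : ℝ) (m : ℕ) :
    Lp ℝ 2 (volume.restrict (Ioi t)) →L[ℝ] Lp ℝ 2 (volume.restrict (Ioi t)) :=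
  ∑ k ∈ Finset.range m,
    kernelCoeff k • InnerProductSpace.rankOne ℝ (gaussMonomialLp t k) (gaussMonomialLp t k)

section Operator

variable (t : ℝ) (m : ℕ)

lemma partialExpKernelOp_apply (f : Lp ℝ 2 (volume.restrict (Ioi t))) :
    partialExpKernelOp t m f =
      ∑ k ∈ Finset.range m,
        (kernelCoeff k * inner ℝ (gaussMonomialLp t k) f) • gaussMonomialLp t k := by
  simp [partialExpKernelOp, smul_smul]

lemma isPositive_partialExpKernelOp : (partialExpKernelOp t m).IsPositive :=
  ContinuousLinearMap.isPositive_sum _ fun k _ =>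
    (InnerProductSpace.isPositive_rankOne_self _).smul_of_nonneg (kernelCoeff_nonneg k)

lemma inner_partialExpKernelOp_self (f : Lp ℝ 2 (volume.restrict (Ioi t))) :
    inner ℝ (partialExpKernelOp t m f) f =
      ∑ k ∈ Finset.range m, kernelCoeff k * inner ℝ (gaussMonomialLp t k) f ^ 2 := by
  rw [partialExpKernelOp_apply, sum_inner]
  refine Finset.sum_congr rfl fun k _ => ?_
  rw [real_inner_smul_left, real_inner_comm, sq, mul_assoc]

lemma coeFn_partialExpKernelOp (f : Lp ℝ 2 (volume.restrict (Ioi t))) :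
    partialExpKernelOp t m f =ᵐ[volume.restrict (Ioi t)]
      fun x => ∫ y in Ioi t, partialExpKernel m x y * f y := by
  have hΦ : ∀ᵐ x ∂(volume.restrict (Ioi t)), ∀ k, gaussMonomialLp t k x = gaussMonomial k x :=
    ae_all_iff.2 fun k => ((memLp_gaussMonomial k).restrict (Ioi t)).coeFn_toLp
  have hsmul : ∀ᵐ x ∂(volume.restrict (Ioi t)), ∀ k,
      ((kernelCoeff k * inner ℝ (gaussMonomialLp t k) f) • gaussMonomialLp t k) x =
        (kernelCoeff k * inner ℝ (gaussMonomialLp t k) f) * gaussMonomialLp t k x :=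
    ae_all_iff.2 fun k => Lp.coeFn_smul _ _
  rw [partialExpKernelOp_apply]
  filter_upwards [Lp.coeFn_fun_finsetSum (Finset.range m) fun k =>
      (kernelCoeff k * inner ℝ (gaussMonomialLp t k) f) • gaussMonomialLp t k, hΦ, hsmul]
    with x hsum hΦx hsmulx
  have hint (k : ℕ) : Integrable (fun y => kernelCoeff k * (gaussMonomial k x *
      gaussMonomial k y) * f y) (volume.restrict (Ioi t)) := by
    simpa only [mul_assoc, Pi.mul_apply] using
      (((memLp_gaussMonomial k).restrict (Ioi t)).integrable_mul (Lp.memLp f)).const_mul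
        (kernelCoeff k * gaussMonomial k x)
  simp_rw [hsum, hsmulx, hΦx, inner_gaussMonomialLp, partialExpKernel_eq_sum, Finset.sum_mul]
  rw [integral_finsetSum _ fun k _ => hint k]
  refine Finset.sum_congr rfl fun k _ => ?_
  rw [← integral_const_mul, ← integral_mul_const]
  exact integral_congr_ae (ae_of_all _ fun y => by ring)

lemma sum_kernelCoeff_mul_inner_sq_le (ht : 0 ≤ t) (f : Lp ℝ 2 (volume.restrict (Ioi t))) :
    ∑ k ∈ Finset.range m, kernelCoeff k * inner ℝ (gaussMonomialLp t k) f ^ 2 ≤ ‖f‖ ^ 2 := by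
  have hpos : ∀ᵐ x ∂(volume.restrict (Ioi t)), 0 ≤ x :=
    ae_restrict_of_forall_mem measurableSet_Ioi fun x hx => ht.trans (le_of_lt hx)
  have hkernel : ∀ᵐ x ∂(volume.restrict (Ioi t)), ∀ᵐ y ∂(volume.restrict (Ioi t)),
      ∑ k ∈ Finset.range m, ENNReal.ofReal (kernelCoeff k) *
        (‖gaussMonomial k x‖ₑ * ‖gaussMonomial k y‖ₑ) ≤ gaussianPDF x 1 y := by
    filter_upwards [hpos] with x hx
    filter_upwards [hpos] with y hy
    calc ∑ k ∈ Finset.range m, ENNReal.ofReal (kernelCoeff k) *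
          (‖gaussMonomial k x‖ₑ * ‖gaussMonomial k y‖ₑ)
        = ENNReal.ofReal (partialExpKernel m x y) := by
          rw [partialExpKernel_eq_sum, ENNReal.ofReal_sum_of_nonneg fun k _ =>
            mul_nonneg (kernelCoeff_nonneg k)
              (mul_nonneg (gaussMonomial_nonneg k hx) (gaussMonomial_nonneg k hy))]
          refine Finset.sum_congr rfl fun k _ => ?_
          rw [ENNReal.ofReal_mul (kernelCoeff_nonneg k), ENNReal.ofReal_mul
            (gaussMonomial_nonneg k hx), Real.enorm_of_nonneg (gaussMonomial_nonneg k hx),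
            Real.enorm_of_nonneg (gaussMonomial_nonneg k hy)]
      _ ≤ gaussianPDF x 1 y :=
          ENNReal.ofReal_le_ofReal (partialExpKernel_le_gaussianPDFReal m (mul_nonneg hx hy))
  have hform := sum_mul_sq_lintegral_mul_le_of_symm (Finset.range m)
    (fun k => ENNReal.ofReal (kernelCoeff k)) (ψ := fun k x => ‖gaussMonomial k x‖ₑ)
    (fun k => ((memLp_gaussMonomial k).restrict (Ioi t)).aestronglyMeasurable.enorm)
    (measurable_uncurry_gaussianPDF 1) (gaussianPDF_comm 1)
    (fun x => (setLIntegral_le_lintegral _ _).trans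
      (lintegral_gaussianPDF_eq_one x one_ne_zero).le)
    hkernel (Lp.aestronglyMeasurable f).enorm
  rw [← ENNReal.ofReal_le_ofReal_iff (by positivity)]
  calc ENNReal.ofReal (∑ k ∈ Finset.range m, kernelCoeff k * inner ℝ (gaussMonomialLp t k) f ^ 2)
      = ∑ k ∈ Finset.range m, ENNReal.ofReal (kernelCoeff k) *
          ‖inner ℝ (gaussMonomialLp t k) f‖ₑ ^ 2 := by
        rw [ENNReal.ofReal_sum_of_nonneg fun k _ =>
          mul_nonneg (kernelCoeff_nonneg k) (sq_nonneg _)]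
        refine Finset.sum_congr rfl fun k _ => ?_
        rw [ENNReal.ofReal_mul (kernelCoeff_nonneg k), Real.enorm_eq_ofReal_abs,
          ← ENNReal.ofReal_pow (abs_nonneg _), sq_abs]
    _ ≤ ∑ k ∈ Finset.range m, ENNReal.ofReal (kernelCoeff k) *
          (∫⁻ x in Ioi t, ‖gaussMonomial k x‖ₑ * ‖f x‖ₑ) ^ 2 := by
        gcongr with k
        rw [inner_gaussMonomialLp]
        simpa only [enorm_mul] using enorm_integral_le_lintegral_enorm
          (μ := volume.restrict (Ioi t)) fun x => gaussMonomial k x * f x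
    _ ≤ 1 * ∫⁻ x in Ioi t, ‖f x‖ₑ ^ 2 := hform
    _ = ENNReal.ofReal (‖f‖ ^ 2) := by
        rw [one_mul, ENNReal.ofReal_pow (norm_nonneg _), ofReal_norm, Lp.enorm_def]
        simpa using (eLpNorm_nnreal_pow_eq_lintegral (f := f) (p := 2) two_ne_zero).symm

lemma norm_partialExpKernelOp_le_one (ht : 0 ≤ t) : ‖partialExpKernelOp t m‖ ≤ 1 :=
  (isPositive_partialExpKernelOp t m).norm_le_of_re_inner_le zero_le_one fun f => by
    simpa [inner_partialExpKernelOp_self] using sum_kernelCoeff_mul_inner_sq_le t m ht f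

end Operator

theorem stmt1_general (n : ℕ) (t : ℝ) (ht : 0 ≤ t) :
    ∃ T : Lp ℝ 2 (volume.restrict (Ioi t)) →L[ℝ] Lp ℝ 2 (volume.restrict (Ioi t)),
      (∀ f : Lp ℝ 2 (volume.restrict (Ioi t)),
        (T f : ℝ → ℝ) =ᵐ[volume.restrict (Ioi t)]
          fun x => ∫ y in Ioi t,
            ((1 / Real.sqrt (2 * π)) * Real.exp (-(x^2 + y^2)/2) *
              ∑ k ∈ Finset.range (n - 1), (x*y)^k / (Nat.factorial k : ℝ)) * f y) ∧
      (∀ f g : Lp ℝ 2 (volume.restrict (Ioi t)),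
        (inner ℝ (T f) g : ℝ) = inner ℝ f (T g)) ∧
      (∀ f : Lp ℝ 2 (volume.restrict (Ioi t)), 0 ≤ (inner ℝ f (T f) : ℝ)) ∧
      ‖T‖ ≤ 1 := by
  have hT := isPositive_partialExpKernelOp t (n - 1)
  exact ⟨partialExpKernelOp t (n - 1), coeFn_partialExpKernelOp t (n - 1),
    hT.inner_left_eq_inner_right, hT.inner_nonneg_right, norm_partialExpKernelOp_le_one t _ ht⟩

/-- For `n ≥ 2` and `t ≥ 0`, the integral operator `T_n` on `L²(t,∞)` with kernel
`T_n(x,y) = (1/√(2π)) e^{-(x²+y²)/2} Σ_{k=0}^{n-2} (xy)^k/k!` is self-adjoint,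
nonnegative and has operator norm at most `1`. -/
theorem stmt1 (n : ℕ) (hn : 2 ≤ n) (t : ℝ) (ht : 0 ≤ t) :
    ∃ T : Lp ℝ 2 (volume.restrict (Ioi t)) →L[ℝ] Lp ℝ 2 (volume.restrict (Ioi t)),
      (∀ f : Lp ℝ 2 (volume.restrict (Ioi t)),
        (T f : ℝ → ℝ) =ᵐ[volume.restrict (Ioi t)]
          fun x => ∫ y in Ioi t,
            ((1 / Real.sqrt (2 * π)) * Real.exp (-(x^2 + y^2)/2) *
              ∑ k ∈ Finset.range (n - 1), (x*y)^k / (Nat.factorial k : ℝ)) * f y) ∧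
      (∀ f g : Lp ℝ 2 (volume.restrict (Ioi t)),
        (inner ℝ (T f) g : ℝ) = inner ℝ f (T g)) ∧
      (∀ f : Lp ℝ 2 (volume.restrict (Ioi t)), 0 ≤ (inner ℝ f (T f) : ℝ)) ∧
      ‖T‖ ≤ 1 :=
  stmt1_general n t ht
end

section
/- For every real x > 0 and real a ≥ 1 with x + 1 - a > 0, the upper incomplete gamma function satisfies Γ(a,x) ≤ x^a e^{-x} / (x + 1 - a). -/
open MeasureTheory Real Set

/-! Since `y ^ b ≤ exp (b (y - 1))` for `y ≥ 0`, `b ≥ 0` (from `y ≤ exp (y - 1)`), taking `y = s / x`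
and `b = a - 1` dominates the integrand `s ^ (a - 1) e^{-s}` by `x ^ (a - 1) e^{-x}` times an
exponential decaying at rate `(x + 1 - a) / x` from `s = x`; integrating that exponential over
`(x, ∞)` gives the factor `x / (x + 1 - a)`. -/

lemma rpow_le_exp_mul_sub_one {y b : ℝ} (hy : 0 ≤ y) (hb : 0 ≤ b) :
    y ^ b ≤ exp (b * (y - 1)) := by
  calc y ^ b ≤ exp (y - 1) ^ b := rpow_le_rpow hy (by linarith [add_one_le_exp (y - 1)]) hb
    _ = exp (b * (y - 1)) := by rw [← exp_mul, mul_comm]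

lemma exp_neg_mul_sub {r x : ℝ} (s : ℝ) :
    exp (-r * (s - x)) = exp (r * x) * exp (-r * s) := by
  rw [← exp_add]; ring_nf

lemma integrableOn_exp_neg_mul_sub_Ioi {r : ℝ} (hr : 0 < r) (x : ℝ) :
    IntegrableOn (fun s ↦ exp (-r * (s - x))) (Ioi x) := by
  simp_rw [exp_neg_mul_sub]
  exact (integrableOn_exp_mul_Ioi (neg_neg_of_pos hr) x).const_mul _

lemma integral_exp_neg_mul_sub_Ioi {r : ℝ} (hr : 0 < r) (x : ℝ) :
    ∫ s in Ioi x, exp (-r * (s - x)) = r⁻¹ := by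
  simp_rw [exp_neg_mul_sub]
  rw [integral_const_mul, integral_exp_mul_Ioi (neg_neg_of_pos hr), neg_div_neg_eq,
    ← mul_div_assoc, ← exp_add]
  simp

lemma rpow_mul_exp_neg_le {a x s : ℝ} (hx : 0 < x) (ha : 1 ≤ a) (hs : 0 ≤ s) :
    s ^ (a - 1) * exp (-s) ≤ x ^ (a - 1) * exp (-x) * exp (-((x + 1 - a) / x) * (s - x)) := by
  have hsx : s ^ (a - 1) = x ^ (a - 1) * (s / x) ^ (a - 1) := by
    rw [div_rpow hs hx.le, mul_div_cancel₀ _ (rpow_pos_of_pos hx _).ne']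
  have hexp : (a - 1) * (s / x - 1) + -s = -x + -((x + 1 - a) / x) * (s - x) := by
    field_simp; ring
  calc s ^ (a - 1) * exp (-s)
      ≤ x ^ (a - 1) * exp ((a - 1) * (s / x - 1)) * exp (-s) := by
        rw [hsx]
        gcongr
        exact rpow_le_exp_mul_sub_one (div_nonneg hs hx.le) (by linarith)
    _ = x ^ (a - 1) * exp (-x) * exp (-((x + 1 - a) / x) * (s - x)) := by
        rw [mul_assoc, ← exp_add, hexp, exp_add, mul_assoc]

/-- For `x > 0` and `a ≥ 1` with `x + 1 - a > 0`, the upper incomplete gamma function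
`Γ(a,x) = ∫_x^∞ t^{a-1} e^{-t} dt` satisfies `Γ(a,x) ≤ x^a e^{-x}/(x + 1 - a)`. -/
theorem stmt4 (a x : ℝ) (hx : 0 < x) (ha : 1 ≤ a) (h : 0 < x + 1 - a) :
    (∫ s in Ioi x, s ^ (a - 1) * Real.exp (-s)) ≤ x ^ a * Real.exp (-x) / (x + 1 - a) := by
  have hr : 0 < (x + 1 - a) / x := div_pos h hx
  calc (∫ s in Ioi x, s ^ (a - 1) * exp (-s))
      ≤ ∫ s in Ioi x, x ^ (a - 1) * exp (-x) * exp (-((x + 1 - a) / x) * (s - x)) := by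
        refine integral_mono_of_nonneg ?_ ((integrableOn_exp_neg_mul_sub_Ioi hr x).const_mul _) ?_
        · filter_upwards [ae_restrict_mem measurableSet_Ioi] with s hs
          have : 0 < s := hx.trans hs
          positivity
        · filter_upwards [ae_restrict_mem measurableSet_Ioi] with s hs
          exact rpow_mul_exp_neg_le hx ha (hx.trans hs).le
    _ = x ^ (a - 1) * exp (-x) * ((x + 1 - a) / x)⁻¹ := by
        rw [integral_const_mul, integral_exp_neg_mul_sub_Ioi hr]
    _ = x ^ a * exp (-x) / (x + 1 - a) := by
        rw [rpow_sub_one hx.ne']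
        field_simp
end

section
/- Uniformly on compact subsets of ℝ, the rescaled functions ψ̃_n(x) := ψ_n(x + √n), where ψ_n(y) = (√(2πn) (n-2)!)^{-1/2} y^{n-1} e^{-y²/2}, converge as n → ∞ to (1/√(2π)) e^{-x²}. -/
/-!
Write `s = √n` and `c_n = (√(2πn) (n-2)!)^{-1/2}`. For `x > -s`,
`ψ_n(x + s) = c_n s^{n-1} e^{-s²/2} · exp (φ_s x)` with
`φ_s x = (s² - 1) log (1 + x/s) - x s - x²/2` (`logProfile`).
Stirling's formula gives `c_n s^{n-1} e^{-n/2} → 1/√(2π)`, and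
`log (1 + t) = t - t²/2 + O(t³)` gives `φ_s x = -x² + O(1/s)` uniformly for bounded `x`.
-/

open Real Set Filter Topology

theorem tendsto_sqrt_natCast_atTop : Tendsto (fun n : ℕ => √(n : ℝ)) atTop atTop :=
  tendsto_sqrt_atTop.comp tendsto_natCast_atTop_atTop

theorem Real.uniformContinuousOn_exp_Iic (a : ℝ) : UniformContinuousOn exp (Iic a) := by
  have h := Complex.uniformContinuous_re.comp_uniformContinuousOn
    ((UniformContinuousOn.cexp a).comp (s := Iic a)
      Complex.isometry_ofReal.uniformContinuous.uniformContinuousOn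
      fun x (hx : x ≤ a) => by simpa using hx)
  convert h using 1
  ext x
  simp [← Complex.ofReal_exp]

theorem TendstoUniformlyOn.rexp {ι α : Type*} {p : Filter ι} {s : Set α} {F : ι → α → ℝ}
    {f : α → ℝ} (h : TendstoUniformlyOn F f p s) (hf : BddAbove (f '' s)) :
    TendstoUniformlyOn (fun i x => exp (F i x)) (fun x => exp (f x)) p s := by
  obtain ⟨C, hC⟩ := hf
  have hfC : ∀ x ∈ s, f x ≤ C := fun x hx => hC (mem_image_of_mem f hx)
  refine (Real.uniformContinuousOn_exp_Iic (C + 1)).comp_tendstoUniformlyOn_eventually ?_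
    (fun x hx => (hfC x hx).trans (by linarith)) h
  filter_upwards [Metric.tendstoUniformlyOn_iff.1 h 1 one_pos] with i hi x hx
  have hdist := hi x hx
  rw [Real.dist_eq, abs_lt] at hdist
  show F i x ≤ C + 1
  linarith [hfC x hx]

theorem Real.abs_log_one_add_sub_le {t : ℝ} (ht : |t| ≤ 1 / 2) :
    |log (1 + t) - (t - t ^ 2 / 2)| ≤ 2 * |t| ^ 3 := by
  have h := Real.abs_log_sub_add_sum_range_le (x := -t) (by rw [abs_neg]; linarith) 2
  simp only [Finset.sum_range_succ, Finset.sum_range_zero, abs_neg, sub_neg_eq_add] at h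
  refine (le_of_eq ?_).trans (h.trans ?_)
  · congr 1; push_cast; ring
  · show |t| ^ 3 / (1 - |t|) ≤ 2 * |t| ^ 3
    rw [div_le_iff₀ (by linarith)]
    nlinarith [mul_nonneg (pow_nonneg (abs_nonneg t) 3) (by linarith : 0 ≤ 1 - 2 * |t|)]

noncomputable def logProfile (s x : ℝ) : ℝ := (s ^ 2 - 1) * log (1 + x / s) - x * s - x ^ 2 / 2

theorem abs_logProfile_add_sq_le {s x : ℝ} (hs : 1 ≤ s) (hx : 2 * |x| ≤ s) :
    |logProfile s x + x ^ 2| ≤ (2 * |x| ^ 3 + x ^ 2 + |x|) / s := by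
  have hs0 : 0 < s := by linarith
  have habs : |x / s| = |x| / s := by rw [abs_div, abs_of_pos hs0]
  obtain ⟨E, hE, hEle⟩ : ∃ E, log (1 + x / s) = x / s - (x / s) ^ 2 / 2 + E ∧
      |E| ≤ 2 * |x| ^ 3 / s ^ 3 := by
    refine ⟨_, (add_sub_cancel _ _).symm, ?_⟩
    refine (Real.abs_log_one_add_sub_le ?_).trans_eq ?_
    · rw [habs, div_le_iff₀ hs0]; linarith
    · rw [habs, div_pow]; ring
  -- `x * s` cancels the leading term `s² · (x / s)` of `(s² - 1) log (1 + x / s)`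
  have hdecomp : logProfile s x + x ^ 2 = (s ^ 2 - 1) * E - x / s + x ^ 2 / (2 * s ^ 2) := by
    rw [logProfile, hE]
    field_simp
    ring
  have h1 : |(s ^ 2 - 1) * E| ≤ 2 * |x| ^ 3 / s := by
    rw [abs_mul, abs_of_nonneg (by nlinarith)]
    calc (s ^ 2 - 1) * |E| ≤ s ^ 2 * (2 * |x| ^ 3 / s ^ 3) := by gcongr; linarith
      _ = 2 * |x| ^ 3 / s := by field_simp
  have h3 : |x ^ 2 / (2 * s ^ 2)| ≤ x ^ 2 / s := by
    rw [abs_of_nonneg (by positivity)]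
    gcongr
    nlinarith
  have hsplit : (2 * |x| ^ 3 + x ^ 2 + |x|) / s = 2 * |x| ^ 3 / s + |x| / s + x ^ 2 / s := by ring
  rw [hdecomp, hsplit, ← habs]
  linarith [abs_add_le ((s ^ 2 - 1) * E - x / s) (x ^ 2 / (2 * s ^ 2)),
    abs_sub ((s ^ 2 - 1) * E) (x / s)]

theorem tendstoUniformlyOn_logProfile {K : Set ℝ} (hK : Bornology.IsBounded K) :
    TendstoUniformlyOn logProfile (fun x => -x ^ 2) atTop K := by
  obtain ⟨M, hKM⟩ := hK.subset_closedBall 0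
  rw [Metric.tendstoUniformlyOn_iff]
  intro ε hε
  filter_upwards [eventually_ge_atTop 1, eventually_ge_atTop (2 * M),
    eventually_gt_atTop ((2 * M ^ 3 + M ^ 2 + M) / ε)] with s hs1 hsM hsC x hx
  have hs0 : 0 < s := by linarith
  have hxM : |x| ≤ M := by simpa using hKM hx
  have hbound : 2 * |x| ^ 3 + x ^ 2 + |x| ≤ 2 * M ^ 3 + M ^ 2 + M := by
    rw [← sq_abs x]; gcongr
  rw [Real.dist_eq, abs_sub_comm, sub_neg_eq_add]
  calc |logProfile s x + x ^ 2| ≤ (2 * |x| ^ 3 + x ^ 2 + |x|) / s :=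
        abs_logProfile_add_sq_le hs1 (by linarith)
    _ ≤ (2 * M ^ 3 + M ^ 2 + M) / s := div_le_div_of_nonneg_right hbound hs0.le
    _ < ε := by rw [div_lt_iff₀ hε] at hsC; rw [div_lt_iff₀ hs0]; linarith

theorem pow_sub_one_mul_exp_neg_div_eq_div_stirlingSeq {n : ℕ} (hn : 2 ≤ n) :
    (n : ℝ) ^ (n - 1) * exp (-n) / (√(2 * π * n) * (n - 2).factorial) =
      (1 - 1 / n) / (2 * √π * Stirling.stirlingSeq n) := by
  have hfac : (n.factorial : ℝ) = n * (n - 1) * (n - 2).factorial := by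
    obtain ⟨m, rfl⟩ := Nat.exists_eq_add_of_le' hn
    push_cast [Nat.factorial_succ]; ring
  have hsqrt : √(2 * π * n) * √(2 * n) = 2 * √π * n := by
    rw [← Real.sqrt_mul (by positivity),
      show 2 * π * (n : ℝ) * (2 * n) = (2 * n) ^ 2 * π by ring, Real.sqrt_mul (by positivity),
      Real.sqrt_sq (by positivity)]
    ring
  have hpow : (n : ℝ) ^ n = n ^ (n - 1) * n := by
    rw [← pow_succ, Nat.sub_add_cancel (by omega)]
  have hn1 : (n : ℝ) - 1 ≠ 0 := by
    rw [sub_ne_zero]; exact_mod_cast (by omega : n ≠ 1)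
  rw [Stirling.stirlingSeq, div_pow, Real.exp_one_pow, hfac, hpow, Real.exp_neg]
  field_simp
  rw [mul_right_comm, hsqrt]

theorem tendsto_pow_sub_one_mul_exp_neg_div_factorial_sub_two :
    Tendsto (fun n : ℕ => (n : ℝ) ^ (n - 1) * exp (-n) / (√(2 * π * n) * (n - 2).factorial))
      atTop (𝓝 (1 / (2 * π))) := by
  have hlim : Tendsto (fun n : ℕ => (1 - 1 / (n : ℝ)) / (2 * √π * Stirling.stirlingSeq n))
      atTop (𝓝 ((1 - 0) / (2 * √π * √π))) :=
    (tendsto_const_nhds.sub tendsto_one_div_atTop_nhds_zero_nat).div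
      (tendsto_const_nhds.mul Stirling.tendsto_stirlingSeq_sqrt_pi) (by positivity)
  rw [mul_assoc, Real.mul_self_sqrt pi_pos.le, sub_zero] at hlim
  exact hlim.congr' (eventually_atTop.2 ⟨2, fun n hn =>
    (pow_sub_one_mul_exp_neg_div_eq_div_stirlingSeq hn).symm⟩)

theorem tendsto_normalizingFactor :
    Tendsto (fun n : ℕ =>
        √(1 / (√(2 * π * n) * (n - 2).factorial)) * √n ^ (n - 1) * exp (-n / 2))
      atTop (𝓝 (1 / √(2 * π))) := by
  have h := (Real.continuous_sqrt.tendsto _).comp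
    tendsto_pow_sub_one_mul_exp_neg_div_factorial_sub_two
  rw [Real.sqrt_div' _ (by positivity), Real.sqrt_one] at h
  refine h.congr fun n => ?_
  rw [Function.comp_apply, Real.sqrt_eq_iff_eq_sq (by positivity) (by positivity), mul_pow,
    mul_pow, Real.sq_sqrt (by positivity), ← pow_mul, pow_mul', Real.sq_sqrt n.cast_nonneg,
    ← Real.exp_nat_mul]
  push_cast
  ring_nf

theorem add_pow_mul_exp_eq {s x : ℝ} (hs : 0 < s) (hx : -s < x) {k : ℕ}
    (hk : (k : ℝ) = s ^ 2 - 1) :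
    (x + s) ^ k * exp (-(x + s) ^ 2 / 2) = s ^ k * exp (-s ^ 2 / 2) * exp (logProfile s x) := by
  have hpos : 0 < 1 + x / s := by
    rw [← div_self hs.ne', ← add_div]; exact div_pos (by linarith) hs
  have hfactor : x + s = s * (1 + x / s) := by field_simp; ring
  have hprofile : exp (logProfile s x) = (1 + x / s) ^ k * exp (-(x * s + x ^ 2 / 2)) := by
    rw [logProfile, ← hk, sub_sub, sub_eq_add_neg, Real.exp_add, Real.exp_nat_mul,
      Real.exp_log hpos]
  have hexp : exp (-(x + s) ^ 2 / 2) = exp (-s ^ 2 / 2) * exp (-(x * s + x ^ 2 / 2)) := by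
    rw [← Real.exp_add]; ring_nf
  rw [hprofile, hexp, hfactor, mul_pow]
  ring

theorem tendstoUniformlyOn_exp_logProfile_sqrt {K : Set ℝ} (hK : Bornology.IsBounded K) :
    TendstoUniformlyOn (fun (n : ℕ) x => exp (logProfile √n x)) (fun x => exp (-x ^ 2))
      atTop K :=
  have hbdd : BddAbove ((fun x : ℝ => -x ^ 2) '' K) :=
    ⟨0, by rintro _ ⟨x, -, rfl⟩; exact neg_nonpos.2 (sq_nonneg x)⟩
  fun u hu => tendsto_sqrt_natCast_atTop.eventually
    (((tendstoUniformlyOn_logProfile hK).rexp hbdd) u hu)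

/-- Uniformly on compact subsets of `ℝ`, the rescaled functions
`ψ̃_n(x) := ψ_n(x + √n)` with `ψ_n(y) = (√(2πn)(n-2)!)^{-1/2} y^{n-1} e^{-y²/2}`
converge, as `n → ∞`, to `(1/√(2π)) e^{-x²}`. -/
theorem stmt6 (K : Set ℝ) (hK : IsCompact K) :
    TendstoUniformlyOn
      (fun (n : ℕ) (x : ℝ) =>
        Real.sqrt (1 / (Real.sqrt (2 * π * n) * (Nat.factorial (n - 2) : ℝ))) *
          (x + Real.sqrt n) ^ (n - 1) * Real.exp (-(x + Real.sqrt n)^2 / 2))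
      (fun x => (1 / Real.sqrt (2 * π)) * Real.exp (-x^2)) atTop K := by
  have hprod := (tendstoLocallyUniformlyOn_iff_tendstoUniformlyOn_of_compact hK).1
    ((tendsto_normalizingFactor.tendstoUniformlyOn_const K).tendstoLocallyUniformlyOn.fun_mul₀
      (tendstoUniformlyOn_exp_logProfile_sqrt hK.isBounded).tendstoLocallyUniformlyOn
      continuousOn_const (by fun_prop))
  obtain ⟨M, hKM⟩ := hK.isBounded.subset_closedBall 0
  refine hprod.congr ?_
  filter_upwards [eventually_ge_atTop 1, tendsto_sqrt_natCast_atTop.eventually_gt_atTop M]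
    with n hn hnM x hx
  have hxM : |x| ≤ M := by simpa using hKM hx
  have hk : ((n - 1 : ℕ) : ℝ) = √n ^ 2 - 1 := by
    rw [Real.sq_sqrt n.cast_nonneg]; push_cast [hn]; ring
  dsimp only
  rw [mul_assoc _ ((x + √n) ^ (n - 1)),
    add_pow_mul_exp_eq (by positivity) (by linarith [neg_abs_le x]) hk, Real.sq_sqrt n.cast_nonneg]
  ring
end

section
/- Let φ, ψ : ℝ → ℝ be continuous with exponential decay at +∞ and assume φ ∈ L¹(ℝ). Let K have kernel K(x,y) = ∫_0^∞ φ(x+u)ψ(y+u) du. Then for every y,t ∈ ℝ and k ≥ 1, ∫_ℝ ((Kχ_t)^k φ_y)(x) dx = (∫_ℝ φ(x) dx) · ∫_0^∞ (Kχ_t)^k(y+t, u+t) du, where φ_y(x) = φ(x+y). -/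
open MeasureTheory Real Set

/-- The kernel `K(x,y) = ∫_0^∞ φ(x+u) ψ(y+u) du`. -/
noncomputable def Kker (φ ψ : ℝ → ℝ) (x y : ℝ) : ℝ :=
  ∫ u in Ioi (0:ℝ), φ (x + u) * ψ (y + u)

/-- The indicator `χ_{[t,∞)}`. -/
noncomputable def chi (t y : ℝ) : ℝ := if t ≤ y then 1 else 0

/-- The kernel of the operator `K χ_t`. -/
noncomputable def KtKer (φ ψ : ℝ → ℝ) (t : ℝ) (x y : ℝ) : ℝ :=
  Kker φ ψ x y * chi t y

/-- The kernel of the operator `K* χ_t`, where `K*` is the real adjoint of `K`. -/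
noncomputable def KstKer (φ ψ : ℝ → ℝ) (t : ℝ) (x y : ℝ) : ℝ :=
  Kker φ ψ y x * chi t y

/-- `kerPow A k` is the kernel of the `(k+1)`-st power of the integral operator
with kernel `A`. -/
noncomputable def kerPow (A : ℝ → ℝ → ℝ) : ℕ → ℝ → ℝ → ℝ
  | 0 => A
  | (k + 1) => fun x y => ∫ z : ℝ, kerPow A k x z * A z y

/-- Application of an integral operator with kernel `A` to a function. -/
noncomputable def opApply (A : ℝ → ℝ → ℝ) (f : ℝ → ℝ) : ℝ → ℝ :=
  fun x => ∫ y : ℝ, A x y * f y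

/-!
Write `A = Kχ_t` and `φ_y = φ(· + y)`. Integrating `A(x, z)` in `x` gives `(∫ φ) · r(z)` with
`r = χ_t ∫_0^∞ ψ(· + u) du`, so the left side is `(∫ φ) ⟨r, A^{k-1} φ_y⟩ = (∫ φ) ⟨r A^{k-1}, φ_y⟩`.
Because `K` is of Hankel type, `A φ_y = ∫_0^∞ φ_s A(y + t, s + t) ds`, so `F_m(y) = ⟨r A^m, φ_y⟩`
satisfies `F_{m+1}(y) = (A F_m(· - t))(y + t)`, the recursion of `(A^{m+1} 1)(y + t)`, and the two
agree at `m = 0` by Fubini. Finally `∫_0^∞ A^k(y + t, u + t) du = (A^k 1)(y + t)` because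
`A^k(x, w)` vanishes for `w < t`. Every exchange of integrals is justified by the rank-one bound
`|A(x, z)| ≤ g(x) h(z)` with `h = χ_t e^{-c·}`, `g = M ∫_0^∞ |φ(· + u)| e^{-cu} du` and `∫ h g < ∞`.
-/

open Function

-- For a kernel dominated by `g ⊗ h`, `opApply` acts on functions integrable against `h` and
-- `rowApply` on functions dominated by a multiple of `h`.
def IsIntegrableAgainst (h f : ℝ → ℝ) : Prop :=
  StronglyMeasurable f ∧ Integrable (fun z => h z * |f z|)

def IsDominatedBy (h r : ℝ → ℝ) : Prop :=
  StronglyMeasurable r ∧ ∃ E, ∀ z, |r z| ≤ E * h z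

noncomputable def rowApply (A : ℝ → ℝ → ℝ) (r : ℝ → ℝ) : ℝ → ℝ :=
  fun z => ∫ w, r w * A w z

structure IsRankOneDominated (A : ℝ → ℝ → ℝ) (g h : ℝ → ℝ) : Prop where
  stronglyMeasurable : StronglyMeasurable (uncurry A)
  stronglyMeasurable_right : StronglyMeasurable h
  nonneg_right : ∀ z, 0 ≤ h z
  integrable_mul : Integrable (fun z => h z * g z)
  abs_le : ∀ x z, |A x z| ≤ g x * h z

namespace IsRankOneDominated

variable {A P : ℝ → ℝ → ℝ} {g g₁ h f r : ℝ → ℝ}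

lemma abs_opApply_le (hA : IsRankOneDominated A g h) (hf : Integrable (fun z => h z * |f z|))
    (x : ℝ) : |opApply A f x| ≤ g x * ∫ z, h z * |f z| := by
  calc |opApply A f x| ≤ ∫ z, |A x z * f z| := abs_integral_le_integral_abs
    _ ≤ ∫ z, g x * (h z * |f z|) := by
        refine integral_mono_of_nonneg (.of_forall fun z => abs_nonneg _) (hf.const_mul _)
          (.of_forall fun z => ?_)
        dsimp only
        rw [abs_mul, ← mul_assoc]
        exact mul_le_mul_of_nonneg_right (hA.abs_le x z) (abs_nonneg _)
    _ = g x * ∫ z, h z * |f z| := integral_const_mul _ _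

lemma stronglyMeasurable_opApply (hA : IsRankOneDominated A g h) (hf : StronglyMeasurable f) :
    StronglyMeasurable (opApply A f) :=
  (hA.stronglyMeasurable.mul (hf.comp_measurable measurable_snd)).integral_prod_right'

lemma isIntegrableAgainst_opApply (hA : IsRankOneDominated A g h)
    (hf : IsIntegrableAgainst h f) : IsIntegrableAgainst h (opApply A f) := by
  refine ⟨hA.stronglyMeasurable_opApply hf.1, ?_⟩
  refine (hA.integrable_mul.mul_const (∫ z, h z * |f z|)).mono'
    (hA.stronglyMeasurable_right.mul (hA.stronglyMeasurable_opApply hf.1).norm).aestronglyMeasurable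
    (.of_forall fun z => ?_)
  rw [norm_mul, Real.norm_eq_abs, Real.norm_eq_abs, abs_abs, abs_of_nonneg (hA.nonneg_right z),
    mul_assoc]
  exact mul_le_mul_of_nonneg_left (hA.abs_opApply_le hf.2 z) (hA.nonneg_right z)

lemma isIntegrableAgainst_iterate_opApply (hA : IsRankOneDominated A g h)
    (hf : IsIntegrableAgainst h f) (n : ℕ) : IsIntegrableAgainst h ((opApply A)^[n] f) := by
  induction n with
  | zero => exact hf
  | succ n ih => rw [iterate_succ_apply']; exact hA.isIntegrableAgainst_opApply ih

lemma integral_opApply (hA : IsRankOneDominated A g h) (hg : Integrable g)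
    (hf : IsIntegrableAgainst h f) : ∫ x, opApply A f x = ∫ z, (∫ x, A x z) * f z := by
  have hint : Integrable (uncurry fun x z => A x z * f z) (volume.prod volume) := by
    refine (hg.mul_prod hf.2).mono'
      (hA.stronglyMeasurable.mul (hf.1.comp_measurable measurable_snd)).aestronglyMeasurable
      (.of_forall fun p => ?_)
    rw [uncurry_apply_pair, Real.norm_eq_abs, abs_mul, ← mul_assoc]
    exact mul_le_mul_of_nonneg_right (hA.abs_le p.1 p.2) (abs_nonneg _)
  simp_rw [opApply, integral_integral_swap hint, integral_mul_const]

lemma isDominatedBy_rowApply (hA : IsRankOneDominated A g h) (hr : IsDominatedBy h r) :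
    IsDominatedBy h (rowApply A r) := by
  obtain ⟨hrm, E, hE⟩ := hr
  refine ⟨((hrm.comp_measurable measurable_snd).mul
    (hA.stronglyMeasurable.comp_measurable measurable_swap)).integral_prod_right',
    E * ∫ w, h w * g w, fun z => ?_⟩
  calc |rowApply A r z| ≤ ∫ w, |r w * A w z| := abs_integral_le_integral_abs
    _ ≤ ∫ w, (E * (h w * g w)) * h z := by
        refine integral_mono_of_nonneg (.of_forall fun w => abs_nonneg _)
          ((hA.integrable_mul.const_mul E).mul_const _) (.of_forall fun w => ?_)
        dsimp only
        rw [abs_mul]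
        calc |r w| * |A w z| ≤ (E * h w) * (g w * h z) :=
              mul_le_mul (hE w) (hA.abs_le w z) (abs_nonneg _) ((abs_nonneg _).trans (hE w))
          _ = (E * (h w * g w)) * h z := by ring
    _ = (E * ∫ w, h w * g w) * h z := by rw [integral_mul_const, integral_const_mul]

lemma isDominatedBy_iterate_rowApply (hA : IsRankOneDominated A g h) (hr : IsDominatedBy h r)
    (n : ℕ) : IsDominatedBy h ((rowApply A)^[n] r) := by
  induction n with
  | zero => exact hr
  | succ n ih => rw [iterate_succ_apply']; exact hA.isDominatedBy_rowApply ih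

lemma integral_mul_opApply (hA : IsRankOneDominated A g h) (hr : IsDominatedBy h r)
    (hf : IsIntegrableAgainst h f) :
    ∫ w, r w * opApply A f w = ∫ z, rowApply A r z * f z := by
  obtain ⟨hrm, E, hE⟩ := hr
  have hint : Integrable (uncurry fun w z => r w * (A w z * f z)) (volume.prod volume) := by
    refine ((hA.integrable_mul.const_mul E).mul_prod hf.2).mono'
      ((hrm.comp_measurable measurable_fst).mul
        (hA.stronglyMeasurable.mul (hf.1.comp_measurable measurable_snd))).aestronglyMeasurable
      (.of_forall fun p => ?_)
    rw [uncurry_apply_pair, Real.norm_eq_abs, abs_mul, abs_mul]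
    calc |r p.1| * (|A p.1 p.2| * |f p.2|) ≤ (E * h p.1) * ((g p.1 * h p.2) * |f p.2|) :=
          mul_le_mul (hE _) (mul_le_mul_of_nonneg_right (hA.abs_le _ _) (abs_nonneg _))
            (by positivity) ((abs_nonneg _).trans (hE _))
      _ = E * (h p.1 * g p.1) * (h p.2 * |f p.2|) := by ring
  simp_rw [opApply, rowApply, ← integral_const_mul, integral_integral_swap hint, ← mul_assoc,
    integral_mul_const]

lemma integral_mul_iterate_opApply (hA : IsRankOneDominated A g h)
    (hf : IsIntegrableAgainst h f) (n : ℕ) (hr : IsDominatedBy h r) :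
    ∫ w, r w * (opApply A)^[n] f w = ∫ z, (rowApply A)^[n] r z * f z := by
  induction n generalizing r with
  | zero => rfl
  | succ n ih =>
    rw [iterate_succ_apply', hA.integral_mul_opApply hr
      (hA.isIntegrableAgainst_iterate_opApply hf n), ih (hA.isDominatedBy_rowApply hr),
      iterate_succ_apply]

lemma comp (hP : IsRankOneDominated P g₁ h) (hA : IsRankOneDominated A g h) :
    IsRankOneDominated (fun x v => ∫ w, P x w * A w v) (fun x => (∫ w, h w * g w) * g₁ x) h where
  stronglyMeasurable :=
    ((hP.stronglyMeasurable.comp_measurable (measurable_fst.fst.prodMk measurable_snd)).mul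
      (hA.stronglyMeasurable.comp_measurable
        (measurable_snd.prodMk measurable_fst.snd))).integral_prod_right'
  stronglyMeasurable_right := hA.stronglyMeasurable_right
  nonneg_right := hA.nonneg_right
  integrable_mul := by
    simpa only [mul_left_comm] using hP.integrable_mul.const_mul (∫ w, h w * g w)
  abs_le x v := by
    calc |∫ w, P x w * A w v| ≤ ∫ w, |P x w * A w v| := abs_integral_le_integral_abs
      _ ≤ ∫ w, g₁ x * (h w * g w) * h v := by
          refine integral_mono_of_nonneg (.of_forall fun w => abs_nonneg _)
            ((hA.integrable_mul.const_mul _).mul_const _) (.of_forall fun w => ?_)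
          dsimp only
          rw [abs_mul]
          calc |P x w| * |A w v| ≤ (g₁ x * h w) * (g w * h v) :=
                mul_le_mul (hP.abs_le x w) (hA.abs_le w v) (abs_nonneg _)
                  ((abs_nonneg _).trans (hP.abs_le x w))
            _ = g₁ x * (h w * g w) * h v := by ring
      _ = (∫ w, h w * g w) * g₁ x * h v := by
          rw [integral_mul_const, integral_const_mul, mul_comm (g₁ x)]

lemma opApply_comp (hP : IsRankOneDominated P g₁ h) (hA : IsRankOneDominated A g h)
    (hf : IsIntegrableAgainst h f) :
    opApply (fun x v => ∫ w, P x w * A w v) f = opApply P (opApply A f) := by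
  funext x
  have hint : Integrable (uncurry fun v w => P x w * (A w v * f v)) (volume.prod volume) := by
    refine (hf.2.mul_prod (hA.integrable_mul.const_mul (g₁ x))).mono'
      ((hP.stronglyMeasurable.comp_measurable (measurable_const.prodMk measurable_snd)).mul
        ((hA.stronglyMeasurable.comp_measurable measurable_swap).mul
          (hf.1.comp_measurable measurable_fst))).aestronglyMeasurable
      (.of_forall fun p => ?_)
    rw [uncurry_apply_pair, Real.norm_eq_abs, abs_mul, abs_mul]
    calc |P x p.2| * (|A p.2 p.1| * |f p.1|) ≤ (g₁ x * h p.2) * ((g p.2 * h p.1) * |f p.1|) :=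
          mul_le_mul (hP.abs_le _ _) (mul_le_mul_of_nonneg_right (hA.abs_le _ _) (abs_nonneg _))
            (by positivity) ((abs_nonneg _).trans (hP.abs_le _ _))
      _ = h p.1 * |f p.1| * (g₁ x * (h p.2 * g p.2)) := by ring
  simp_rw [opApply, ← integral_mul_const, mul_assoc, integral_integral_swap hint,
    integral_const_mul]

lemma pow (hA : IsRankOneDominated A g h) (n : ℕ) :
    IsRankOneDominated (kerPow A n) (fun x => (∫ w, h w * g w) ^ n * g x) h := by
  induction n with
  | zero =>
    simp only [pow_zero, one_mul]
    exact hA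
  | succ n ih =>
    convert ih.comp hA using 2
    · rfl
    · ring

lemma opApply_kerPow (hA : IsRankOneDominated A g h) (n : ℕ) (hf : IsIntegrableAgainst h f) :
    opApply (kerPow A n) f = (opApply A)^[n + 1] f := by
  induction n generalizing f with
  | zero => rfl
  | succ n ih =>
    rw [iterate_succ_apply, ← ih (hA.isIntegrableAgainst_opApply hf)]
    exact (hA.pow n).opApply_comp hA hf

end IsRankOneDominated

lemma kerPow_eq_zero_of_lt {A : ℝ → ℝ → ℝ} {t : ℝ} (hA : ∀ x w, w < t → A x w = 0) (n : ℕ)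
    (x w : ℝ) (hw : w < t) : kerPow A n x w = 0 := by
  cases n with
  | zero => exact hA x w hw
  | succ n => simp [kerPow, hA _ w hw]

lemma integral_chi_mul (t : ℝ) (F : ℝ → ℝ) :
    ∫ z, chi t z * F z = ∫ p in Ioi (0:ℝ), F (p + t) := by
  have hind : (fun z => chi t z * F z) = (Ici t).indicator F := by
    ext z; by_cases hz : t ≤ z <;> simp [chi, hz]
  rw [hind, integral_indicator measurableSet_Ici, integral_Ici_eq_integral_Ioi,
    ← (measurePreserving_add_right volume t).setIntegral_preimage_emb
      (measurableEmbedding_addRight t), preimage_add_const_Ioi, sub_self]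

lemma integral_Ioi_comp_add_of_eq_zero {F : ℝ → ℝ} {t : ℝ} (hF : ∀ w, w < t → F w = 0) :
    ∫ p in Ioi (0:ℝ), F (p + t) = ∫ w, F w := by
  rw [← integral_chi_mul]
  congr 1; ext w
  by_cases hw : t ≤ w
  · simp [chi, hw]
  · simp [chi, hw, hF w (not_le.1 hw)]

lemma integrable_prod_comp_add_mul {ν : Measure ℝ} [SFinite ν] {f G : ℝ → ℝ}
    (hfm : Measurable f) (hf : Integrable f) (hGm : Measurable G) (hG : Integrable G ν) :
    Integrable (fun p : ℝ × ℝ => f (p.1 + p.2) * G p.2) (volume.prod ν) := by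
  have hm : Measurable fun p : ℝ × ℝ => f (p.1 + p.2) * G p.2 := by fun_prop
  refine (integrable_prod_iff' hm.aestronglyMeasurable).2
      ⟨.of_forall fun s => (hf.comp_add_right s).mul_const (G s), ?_⟩
  simp_rw [norm_mul, integral_mul_const, integral_add_right_eq_self (fun x => ‖f x‖)]
  exact hG.norm.const_mul _

lemma exists_abs_le_mul_exp_of_le {ψ : ℝ → ℝ} {c C : ℝ} (hψ : Continuous ψ)
    (hdecay : ∀ x, 0 ≤ x → |ψ x| ≤ C * exp (-c * x)) (a : ℝ) :
    ∃ M, ∀ x, a ≤ x → |ψ x| ≤ M * exp (-c * x) := by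
  obtain ⟨B, hB⟩ := isCompact_Icc.exists_bound_of_continuousOn
    (hψ.abs.mul (continuous_exp.comp (continuous_const.mul continuous_id))).continuousOn
      (s := Icc a 0)
  refine ⟨max B C, fun x hx => ?_⟩
  rcases le_or_gt 0 x with hx0 | hx0
  · exact (hdecay x hx0).trans (by gcongr; exact le_max_right _ _)
  · have hbound : |ψ x| * exp (c * x) ≤ B := by
      simpa [abs_of_pos (exp_pos _)] using hB x ⟨hx, hx0.le⟩
    calc |ψ x| = |ψ x| * exp (c * x) * exp (-c * x) := by
          rw [mul_assoc, ← exp_add]; simp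
      _ ≤ max B C * exp (-c * x) := by gcongr; exact hbound.trans (le_max_left _ _)

-- The weight `h`, the weight `g / M` and the row `r` of the proof sketch.
noncomputable def expWeight (c t z : ℝ) : ℝ := chi t z * exp (-c * z)

noncomputable def expTail (φ : ℝ → ℝ) (c x : ℝ) : ℝ :=
  ∫ u in Ioi (0:ℝ), |φ (x + u)| * exp (-c * u)

noncomputable def psiTail (ψ : ℝ → ℝ) (t z : ℝ) : ℝ := chi t z * ∫ u in Ioi (0:ℝ), ψ (z + u)

section Weights

variable {φ : ℝ → ℝ} {c t : ℝ}

lemma measurable_chi (t : ℝ) : Measurable (chi t) :=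
  Measurable.ite measurableSet_Ici measurable_const measurable_const

lemma expWeight_nonneg (c t z : ℝ) : 0 ≤ expWeight c t z := by
  unfold expWeight chi; split_ifs <;> positivity

lemma expWeight_le (hc : 0 ≤ c) (z : ℝ) : expWeight c t z ≤ exp (-c * t) := by
  unfold expWeight chi
  split_ifs with hz
  · rw [one_mul]; exact exp_le_exp.2 (by nlinarith)
  · rw [zero_mul]; positivity

lemma measurable_expWeight (c t : ℝ) : Measurable (expWeight c t) :=
  (measurable_chi t).mul (by fun_prop)

lemma integrable_expWeight (hc : 0 < c) (t : ℝ) : Integrable (expWeight c t) := by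
  have hind : expWeight c t = (Ici t).indicator fun z => exp (-c * z) := by
    ext z; by_cases hz : t ≤ z <;> simp [expWeight, chi, hz]
  rw [hind, integrable_indicator_iff measurableSet_Ici,
    integrableOn_Ici_iff_integrableOn_Ioi]
  exact exp_neg_integrableOn_Ioi t hc

lemma integrable_expTail (hφ : Measurable φ) (hφ1 : Integrable φ) (hc : 0 < c) :
    Integrable (expTail φ c) :=
  (integrable_prod_comp_add_mul hφ.abs hφ1.abs (by fun_prop)
    (exp_neg_integrableOn_Ioi 0 hc)).integral_prod_left

end Weights

section Kernel

variable {φ ψ : ℝ → ℝ} {c M t : ℝ}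

lemma abs_comp_add_le (hψ : ∀ x, t ≤ x → |ψ x| ≤ M * exp (-c * x)) {z u : ℝ} (hz : t ≤ z)
    (hu : 0 ≤ u) : |ψ (z + u)| ≤ M * exp (-c * z) * exp (-c * u) := by
  rw [mul_assoc, ← exp_add, ← mul_add]
  exact hψ _ (by linarith)

lemma integrableOn_comp_add_Ioi (hψm : Measurable ψ) (hc : 0 < c)
    (hψ : ∀ x, t ≤ x → |ψ x| ≤ M * exp (-c * x)) {z : ℝ} (hz : t ≤ z) :
    IntegrableOn (fun u => ψ (z + u)) (Ioi 0) := by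
  refine ((exp_neg_integrableOn_Ioi 0 hc).const_mul (M * exp (-c * z))).mono'
    (hψm.comp (measurable_const_add z)).aestronglyMeasurable ?_
  filter_upwards [ae_restrict_mem measurableSet_Ioi] with u hu
  exact abs_comp_add_le hψ hz (le_of_lt hu)

lemma integrableOn_abs_comp_add_mul_exp (hφ1 : Integrable φ) (hc : 0 ≤ c)
    (x : ℝ) : IntegrableOn (fun u => |φ (x + u)| * exp (-c * u)) (Ioi 0) := by
  refine (hφ1.comp_add_left x).abs.integrableOn.mul_bdd (c := 1)
    (by fun_prop : Measurable fun u : ℝ => exp (-c * u)).aestronglyMeasurable ?_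
  filter_upwards [ae_restrict_mem measurableSet_Ioi] with u hu
  rw [Real.norm_eq_abs, abs_of_pos (exp_pos _)]
  exact exp_le_one_iff.2 (by nlinarith [mem_Ioi.1 hu])

lemma stronglyMeasurable_Kker (hφ : Measurable φ) (hψm : Measurable ψ) :
    StronglyMeasurable (uncurry (Kker φ ψ)) := by
  have hm : Measurable fun q : (ℝ × ℝ) × ℝ => φ (q.1.1 + q.2) * ψ (q.1.2 + q.2) := by fun_prop
  exact hm.stronglyMeasurable.integral_prod_right'

lemma abs_Kker_le (hφ1 : Integrable φ) (hc : 0 ≤ c)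
    (hψ : ∀ x, t ≤ x → |ψ x| ≤ M * exp (-c * x)) (x : ℝ) {z : ℝ} (hz : t ≤ z) :
    |Kker φ ψ x z| ≤ M * expTail φ c x * exp (-c * z) := by
  calc |Kker φ ψ x z| ≤ ∫ u in Ioi (0:ℝ), |φ (x + u) * ψ (z + u)| :=
        abs_integral_le_integral_abs
    _ ≤ ∫ u in Ioi (0:ℝ), (M * exp (-c * z)) * (|φ (x + u)| * exp (-c * u)) := by
        refine integral_mono_of_nonneg (.of_forall fun u => abs_nonneg _)
          ((integrableOn_abs_comp_add_mul_exp hφ1 hc x).const_mul _) ?_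
        filter_upwards [ae_restrict_mem measurableSet_Ioi] with u hu
        rw [abs_mul]
        calc |φ (x + u)| * |ψ (z + u)| ≤ |φ (x + u)| * (M * exp (-c * z) * exp (-c * u)) :=
              mul_le_mul_of_nonneg_left (abs_comp_add_le hψ hz (le_of_lt hu)) (abs_nonneg _)
          _ = _ := by ring
    _ = M * expTail φ c x * exp (-c * z) := by rw [integral_const_mul, expTail]; ring

lemma isRankOneDominated_KtKer (hφ : Measurable φ) (hφ1 : Integrable φ) (hψm : Measurable ψ)
    (hc : 0 < c) (hψ : ∀ x, t ≤ x → |ψ x| ≤ M * exp (-c * x)) :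
    IsRankOneDominated (KtKer φ ψ t) (fun x => M * expTail φ c x) (expWeight c t) where
  stronglyMeasurable :=
    (stronglyMeasurable_Kker hφ hψm).mul ((measurable_chi t).comp measurable_snd).stronglyMeasurable
  stronglyMeasurable_right := (measurable_expWeight c t).stronglyMeasurable
  nonneg_right := expWeight_nonneg c t
  integrable_mul := by
    refine ((integrable_expTail hφ hφ1 hc).const_mul M).bdd_mul (c := exp (-c * t))
      (measurable_expWeight c t).aestronglyMeasurable (.of_forall fun z => ?_)
    rw [Real.norm_eq_abs, abs_of_nonneg (expWeight_nonneg c t z)]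
    exact expWeight_le hc.le z
  abs_le x z := by
    by_cases hz : t ≤ z
    · simpa [KtKer, expWeight, chi, hz] using abs_Kker_le hφ1 hc.le hψ x hz
    · simp [KtKer, expWeight, chi, hz]

lemma integral_KtKer_left (hφ : Measurable φ) (hφ1 : Integrable φ) (hψm : Measurable ψ)
    (hc : 0 < c) (hψ : ∀ x, t ≤ x → |ψ x| ≤ M * exp (-c * x)) (z : ℝ) :
    ∫ x, KtKer φ ψ t x z = (∫ x, φ x) * psiTail ψ t z := by
  by_cases hz : t ≤ z
  · have hint := integrable_prod_comp_add_mul hφ hφ1 (hψm.comp (measurable_const_add z))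
      (integrableOn_comp_add_Ioi hψm hc hψ hz)
    simp only [KtKer, psiTail, Kker, chi, if_pos hz, mul_one, one_mul]
    rw [integral_integral_swap hint]
    simp_rw [integral_mul_const, integral_add_right_eq_self φ, integral_const_mul]
  · simp [KtKer, psiTail, chi, hz]

lemma isDominatedBy_psiTail (hψm : Measurable ψ) (hc : 0 < c)
    (hψ : ∀ x, t ≤ x → |ψ x| ≤ M * exp (-c * x)) : IsDominatedBy (expWeight c t) (psiTail ψ t) := by
  have hm : Measurable fun q : ℝ × ℝ => ψ (q.1 + q.2) := by fun_prop
  refine ⟨((measurable_chi t).stronglyMeasurable).mul hm.stronglyMeasurable.integral_prod_right',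
    M * ∫ u in Ioi (0:ℝ), exp (-c * u), fun z => ?_⟩
  by_cases hz : t ≤ z
  · simp only [psiTail, expWeight, chi, if_pos hz, one_mul]
    calc |∫ u in Ioi (0:ℝ), ψ (z + u)| ≤ ∫ u in Ioi (0:ℝ), |ψ (z + u)| :=
          abs_integral_le_integral_abs
      _ ≤ ∫ u in Ioi (0:ℝ), M * exp (-c * z) * exp (-c * u) := by
          refine integral_mono_of_nonneg (.of_forall fun u => abs_nonneg _)
            ((exp_neg_integrableOn_Ioi 0 hc).const_mul _) ?_
          filter_upwards [ae_restrict_mem measurableSet_Ioi] with u hu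
          exact abs_comp_add_le hψ hz (le_of_lt hu)
      _ = M * (∫ u in Ioi (0:ℝ), exp (-c * u)) * exp (-c * z) := by
          rw [integral_const_mul]; ring
  · simp [psiTail, expWeight, chi, hz]

lemma integrable_mul_comp_add_add_mul (hψm : Measurable ψ) (hc : 0 ≤ c)
    (hψ : ∀ x, t ≤ x → |ψ x| ≤ M * exp (-c * x)) {a b : ℝ → ℝ} (ham : Measurable a)
    (hbm : Measurable b) (ha : IntegrableOn a (Ioi 0))
    (hb : IntegrableOn (fun p => exp (-c * p) * b p) (Ioi 0)) :
    Integrable (uncurry fun p s => a s * ψ (p + t + s) * b p)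
      ((volume.restrict (Ioi 0)).prod (volume.restrict (Ioi 0))) := by
  have hM : 0 ≤ M :=
    (mul_nonneg_iff_of_pos_right (exp_pos _)).1 ((abs_nonneg _).trans (hψ t le_rfl))
  have hm : Measurable fun q : ℝ × ℝ => a q.2 * ψ (q.1 + t + q.2) * b q.1 := by fun_prop
  refine ((hb.norm.const_mul (M * exp (-c * t))).mul_prod ha.norm).mono'
    hm.aestronglyMeasurable ?_
  rw [Measure.prod_restrict]
  filter_upwards [ae_restrict_mem (measurableSet_Ioi.prod measurableSet_Ioi)] with ⟨p, s⟩ ⟨hp, hs⟩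
  have hψps : |ψ (p + t + s)| ≤ M * exp (-c * t) * exp (-c * p) := by
    calc |ψ (p + t + s)| ≤ M * exp (-c * (p + t)) * exp (-c * s) :=
          abs_comp_add_le hψ (by linarith [mem_Ioi.1 hp]) (le_of_lt hs)
      _ ≤ M * exp (-c * (p + t)) * 1 := by
          gcongr; exact exp_le_one_iff.2 (by nlinarith [mem_Ioi.1 hs])
      _ = M * exp (-c * t) * exp (-c * p) := by
          rw [mul_one, mul_assoc, ← exp_add]; ring_nf
  simp only [uncurry_apply_pair, norm_mul, Real.norm_eq_abs, abs_of_pos (exp_pos _)]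
  calc |a s| * |ψ (p + t + s)| * |b p|
      ≤ |a s| * (M * exp (-c * t) * exp (-c * p)) * |b p| := by gcongr
    _ = M * exp (-c * t) * (exp (-c * p) * |b p|) * |a s| := by ring

lemma integral_psiTail_mul (hφ : Measurable φ) (hφ1 : Integrable φ) (hψm : Measurable ψ)
    (hc : 0 < c) (hψ : ∀ x, t ≤ x → |ψ x| ≤ M * exp (-c * x)) (y : ℝ) :
    ∫ z, psiTail ψ t z * φ (z + y) = opApply (KtKer φ ψ t) 1 (y + t) := by
  have hint := integrable_mul_comp_add_add_mul hψm hc.le hψ (a := fun u => φ (y + t + u))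
    (b := fun _ => 1) (by fun_prop) measurable_const (hφ1.comp_add_left (y + t)).integrableOn
    (by simpa using exp_neg_integrableOn_Ioi 0 hc)
  simp only [mul_one] at hint
  calc ∫ z, psiTail ψ t z * φ (z + y)
      = ∫ p in Ioi (0:ℝ), (∫ u in Ioi (0:ℝ), ψ (p + t + u)) * φ (p + t + y) := by
        simp_rw [psiTail, mul_assoc, integral_chi_mul]
    _ = ∫ u in Ioi (0:ℝ), ∫ s in Ioi (0:ℝ), φ (y + t + u) * ψ (s + t + u) := by
        simp_rw [← integral_mul_const]
        refine setIntegral_congr_fun measurableSet_Ioi fun u _ => ?_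
        refine setIntegral_congr_fun measurableSet_Ioi fun s _ => ?_
        ring_nf
    _ = opApply (KtKer φ ψ t) 1 (y + t) := by
        rw [← integral_integral_swap hint]
        simp_rw [opApply, KtKer, Pi.one_apply, mul_one, mul_comm (Kker φ ψ _ _), integral_chi_mul]
        rfl

lemma opApply_KtKer_comp_add (hφ : Measurable φ) (hφ1 : Integrable φ) (hψm : Measurable ψ)
    (hc : 0 < c) (hψ : ∀ x, t ≤ x → |ψ x| ≤ M * exp (-c * x)) (y w : ℝ) :
    opApply (KtKer φ ψ t) (fun z => φ (z + y)) w
      = ∫ s in Ioi (0:ℝ), φ (w + s) * Kker φ ψ (y + t) (s + t) := by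
  have hb : IntegrableOn (fun p => exp (-c * p) * φ (p + (t + y))) (Ioi 0) := by
    refine (hφ1.comp_add_right (t + y)).integrableOn.bdd_mul (c := 1) (by fun_prop) ?_
    filter_upwards [ae_restrict_mem measurableSet_Ioi] with p hp
    rw [Real.norm_eq_abs, abs_of_pos (exp_pos _)]
    exact exp_le_one_iff.2 (by nlinarith [mem_Ioi.1 hp])
  have hint := integrable_mul_comp_add_add_mul hψm hc.le hψ (a := fun s => φ (w + s))
    (b := fun p => φ (p + t + y)) (by fun_prop) (by fun_prop)
    (hφ1.comp_add_left w).integrableOn (by simpa only [add_assoc] using hb)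
  calc opApply (KtKer φ ψ t) (fun z => φ (z + y)) w
      = ∫ p in Ioi (0:ℝ), ∫ s in Ioi (0:ℝ), φ (w + s) * ψ (p + t + s) * φ (p + t + y) := by
        simp_rw [opApply, KtKer, mul_right_comm _ (chi t _), mul_comm _ (chi t _),
          integral_chi_mul, Kker, integral_mul_const]
    _ = ∫ s in Ioi (0:ℝ), φ (w + s) * Kker φ ψ (y + t) (s + t) := by
        rw [integral_integral_swap hint]
        simp_rw [mul_assoc, integral_const_mul, Kker]
        refine setIntegral_congr_fun measurableSet_Ioi fun s _ => ?_
        congr 1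
        refine setIntegral_congr_fun measurableSet_Ioi fun p _ => ?_
        ring_nf

lemma IsDominatedBy.exists_abs_le_of_expWeight {ρ : ℝ → ℝ} (hρ : IsDominatedBy (expWeight c t) ρ)
    (hc : 0 ≤ c) : ∃ B, ∀ w, |ρ w| ≤ B := by
  obtain ⟨-, E, hE⟩ := hρ
  refine ⟨|E| * exp (-c * t), fun w => ?_⟩
  calc |ρ w| ≤ E * expWeight c t w := hE w
    _ ≤ |E| * expWeight c t w := by gcongr; exacts [expWeight_nonneg c t w, le_abs_self E]
    _ ≤ |E| * exp (-c * t) := by gcongr; exact expWeight_le hc w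

lemma integrableOn_Kker_add (hφ : Measurable φ) (hφ1 : Integrable φ) (hψm : Measurable ψ)
    (hc : 0 < c) (hψ : ∀ x, t ≤ x → |ψ x| ≤ M * exp (-c * x)) (x : ℝ) :
    IntegrableOn (fun s => Kker φ ψ x (s + t)) (Ioi 0) := by
  refine ((exp_neg_integrableOn_Ioi 0 hc).const_mul (M * expTail φ c x * exp (-c * t))).mono'
    ((stronglyMeasurable_Kker hφ hψm).measurable.comp
      (measurable_const.prodMk (measurable_add_const t))).aestronglyMeasurable ?_
  filter_upwards [ae_restrict_mem measurableSet_Ioi] with s hs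
  calc ‖Kker φ ψ x (s + t)‖ ≤ M * expTail φ c x * exp (-c * (s + t)) :=
        abs_Kker_le hφ1 hc.le hψ x (by linarith [mem_Ioi.1 hs])
    _ = M * expTail φ c x * exp (-c * t) * exp (-c * s) := by rw [mul_add, exp_add]; ring

lemma integral_mul_opApply_KtKer_comp_add (hφ : Measurable φ) (hφ1 : Integrable φ)
    (hψm : Measurable ψ) (hc : 0 < c) (hψ : ∀ x, t ≤ x → |ψ x| ≤ M * exp (-c * x))
    {ρ : ℝ → ℝ} (hρ : IsDominatedBy (expWeight c t) ρ) (y : ℝ) :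
    ∫ w, ρ w * opApply (KtKer φ ψ t) (fun z => φ (z + y)) w
      = opApply (KtKer φ ψ t) (fun w => ∫ z, ρ z * φ (z + (w - t))) (y + t) := by
  obtain ⟨B, hB⟩ := hρ.exists_abs_le_of_expWeight hc.le
  set N : ℝ → ℝ := fun s => Kker φ ψ (y + t) (s + t) with hNdef
  have hNm : Measurable N := (stronglyMeasurable_Kker hφ hψm).measurable.comp
    (measurable_const.prodMk (measurable_add_const t))
  have hint : Integrable (uncurry fun w s => ρ w * (φ (w + s) * N s))
      (volume.prod (volume.restrict (Ioi 0))) := by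
    refine (integrable_prod_comp_add_mul hφ.abs hφ1.abs (hNm.abs.const_mul B)
      ((integrableOn_Kker_add hφ hφ1 hψm hc hψ (y + t)).norm.const_mul B)).mono'
      ((hρ.1.comp_measurable measurable_fst).mul
        ((by fun_prop : Measurable fun q : ℝ × ℝ => φ (q.1 + q.2)).stronglyMeasurable.mul
          (hNm.comp measurable_snd).stronglyMeasurable)).aestronglyMeasurable
      (.of_forall fun ⟨w, s⟩ => ?_)
    simp only [uncurry_apply_pair, norm_mul, Real.norm_eq_abs]
    calc |ρ w| * (|φ (w + s)| * |N s|) ≤ B * (|φ (w + s)| * |N s|) := by gcongr; exact hB w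
      _ = |φ (w + s)| * (B * |N s|) := by ring
  calc ∫ w, ρ w * opApply (KtKer φ ψ t) (fun z => φ (z + y)) w
      = ∫ w, ∫ s in Ioi (0:ℝ), ρ w * (φ (w + s) * N s) := by
        simp_rw [opApply_KtKer_comp_add hφ hφ1 hψm hc hψ y, integral_const_mul, hNdef]
    _ = ∫ s in Ioi (0:ℝ), N s * ∫ z, ρ z * φ (z + s) := by
        rw [integral_integral_swap hint]
        simp_rw [← integral_const_mul]
        refine setIntegral_congr_fun measurableSet_Ioi fun s _ => ?_
        congr 1; ext w; ring
    _ = opApply (KtKer φ ψ t) (fun w => ∫ z, ρ z * φ (z + (w - t))) (y + t) := by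
        simp_rw [opApply, KtKer, mul_right_comm _ (chi t _), mul_comm _ (chi t _),
          integral_chi_mul, add_sub_cancel_right, hNdef]

lemma isIntegrableAgainst_one (hc : 0 < c) : IsIntegrableAgainst (expWeight c t) 1 :=
  ⟨stronglyMeasurable_const, by simpa using integrable_expWeight hc t⟩

lemma isIntegrableAgainst_comp_add (hφ : Measurable φ) (hφ1 : Integrable φ) (hc : 0 ≤ c)
    (y : ℝ) : IsIntegrableAgainst (expWeight c t) (fun z => φ (z + y)) := by
  refine ⟨(hφ.comp (measurable_add_const y)).stronglyMeasurable,
    (hφ1.comp_add_right y).abs.bdd_mul (c := exp (-c * t))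
      (measurable_expWeight c t).aestronglyMeasurable (.of_forall fun z => ?_)⟩
  rw [Real.norm_eq_abs, abs_of_nonneg (expWeight_nonneg c t z)]
  exact expWeight_le hc z

lemma integral_iterate_rowApply_psiTail_mul (hφ : Measurable φ) (hφ1 : Integrable φ)
    (hψm : Measurable ψ) (hc : 0 < c) (hψ : ∀ x, t ≤ x → |ψ x| ≤ M * exp (-c * x)) (n : ℕ)
    (y : ℝ) : ∫ z, (rowApply (KtKer φ ψ t))^[n] (psiTail ψ t) z * φ (z + y)
      = (opApply (KtKer φ ψ t))^[n + 1] 1 (y + t) := by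
  have hA := isRankOneDominated_KtKer hφ hφ1 hψm hc hψ
  induction n generalizing y with
  | zero => exact integral_psiTail_mul hφ hφ1 hψm hc hψ y
  | succ n ih =>
    have hρ := hA.isDominatedBy_iterate_rowApply (isDominatedBy_psiTail hψm hc hψ) n
    rw [iterate_succ_apply', ← hA.integral_mul_opApply hρ
      (isIntegrableAgainst_comp_add hφ hφ1 hc.le y),
      integral_mul_opApply_KtKer_comp_add hφ hφ1 hψm hc hψ hρ y, iterate_succ_apply' _ (n + 1)]
    congr 1; funext w
    rw [ih (w - t), sub_add_cancel]

lemma integral_iterate_opApply_KtKer_comp_add (hφ : Measurable φ) (hφ1 : Integrable φ)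
    (hψm : Measurable ψ) (hc : 0 < c) (hψ : ∀ x, t ≤ x → |ψ x| ≤ M * exp (-c * x)) (n : ℕ)
    (y : ℝ) : ∫ x, (opApply (KtKer φ ψ t))^[n + 1] (fun z => φ (z + y)) x
      = (∫ x, φ x) * ∫ z, (rowApply (KtKer φ ψ t))^[n] (psiTail ψ t) z * φ (z + y) := by
  have hA := isRankOneDominated_KtKer hφ hφ1 hψm hc hψ
  have hφy := isIntegrableAgainst_comp_add hφ hφ1 hc.le (t := t) y
  rw [iterate_succ_apply', hA.integral_opApply ((integrable_expTail hφ hφ1 hc).const_mul M)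
    (hA.isIntegrableAgainst_iterate_opApply hφy n)]
  simp_rw [integral_KtKer_left hφ hφ1 hψm hc hψ, mul_assoc, integral_const_mul]
  rw [hA.integral_mul_iterate_opApply hφy n (isDominatedBy_psiTail hψm hc hψ)]

lemma integral_Ioi_kerPow_KtKer (hφ : Measurable φ) (hφ1 : Integrable φ) (hψm : Measurable ψ)
    (hc : 0 < c) (hψ : ∀ x, t ≤ x → |ψ x| ≤ M * exp (-c * x)) (n : ℕ) (x : ℝ) :
    ∫ u in Ioi (0:ℝ), kerPow (KtKer φ ψ t) n x (u + t) = (opApply (KtKer φ ψ t))^[n + 1] 1 x := by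
  have hA0 : ∀ x w, w < t → KtKer φ ψ t x w = 0 := fun x w hw => by
    simp [KtKer, chi, not_le.2 hw]
  rw [integral_Ioi_comp_add_of_eq_zero (kerPow_eq_zero_of_lt hA0 n x),
    ← (isRankOneDominated_KtKer hφ hφ1 hψm hc hψ).opApply_kerPow n (isIntegrableAgainst_one hc)]
  simp [opApply]

end Kernel

/-- For continuous `φ, ψ` decaying exponentially at `+∞` with `φ ∈ L¹(ℝ)`,
for every `y, t ∈ ℝ` and `k ≥ 1`:
`∫_ℝ ((Kχ_t)^k φ_y)(x) dx = (∫_ℝ φ) · ∫_0^∞ (Kχ_t)^k(y+t, u+t) du`,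
where `φ_y(x) = φ(x+y)`. -/
theorem stmt9 (φ ψ : ℝ → ℝ) (hφ : Continuous φ) (hψ : Continuous ψ)
    (hdecay : ∃ c > (0:ℝ), ∃ C : ℝ, ∀ x : ℝ, 0 ≤ x →
      |φ x| ≤ C * Real.exp (-c * x) ∧ |ψ x| ≤ C * Real.exp (-c * x))
    (hφ1 : Integrable φ) (y t : ℝ) (k : ℕ) (hk : 1 ≤ k) :
    (∫ x : ℝ, (opApply (KtKer φ ψ t))^[k] (fun z => φ (z + y)) x)
      = (∫ x : ℝ, φ x) *
          ∫ u in Ioi (0:ℝ), kerPow (KtKer φ ψ t) (k - 1) (y + t) (u + t) := by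
  obtain ⟨c, hc, C, hdecay⟩ := hdecay
  obtain ⟨M, hM⟩ := exists_abs_le_mul_exp_of_le hψ (fun x hx => (hdecay x hx).2) t
  obtain ⟨n, rfl⟩ : ∃ n, k = n + 1 := ⟨k - 1, by omega⟩
  rw [Nat.add_sub_cancel,
    integral_iterate_opApply_KtKer_comp_add hφ.measurable hφ1 hψ.measurable hc hM,
    integral_iterate_rowApply_psiTail_mul hφ.measurable hφ1 hψ.measurable hc hM,
    integral_Ioi_kerPow_KtKer hφ.measurable hφ1 hψ.measurable hc hM]
end
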